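/- arXiv:1109.4009 — 9 statements merged into one kernel-verified Lean document; each statement's English description precedes it below -/
import Mathlib

section
/- Let N ≥ 2. There exists a constant C > 0, depending only on N, such that for every function u : [0,1] → ℝ that is continuous on [0,1], differentiable on (0,1), nonnegative, and nondecreasing, one has sup_{r ∈ [0,1]} u(r) ≤ C · ∫₀¹ (u(r) + u'(r)) r^{N−1} dr. -/
open Set MeasureTheory

/-!
For `u` nondecreasing, `sup u = u 1 = u (1/2) + ∫_{1/2}^1 u'` and `u (1/2) ≤ 2 ∫_{1/2}^1 u`,
so `sup u ≤ 2 ∫_{1/2}^1 (u + u')`. On `(1/2, 1)` the weight `t ^ (N - 1)` is at least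
`2 ^ (1 - N)`, which gives the constant `C = 2 · 2 ^ (N - 1)`. Since `u' ≥ 0`, the derivative is
automatically integrable and the fundamental theorem of calculus applies.
-/

section

variable {u : ℝ → ℝ} {a b : ℝ}

lemma MonotoneOn.deriv_nonneg_of_mem_Ioo (hmono : MonotoneOn u (Icc a b)) {x : ℝ}
    (hx : x ∈ Ioo a b) : 0 ≤ deriv u x := by
  rw [← derivWithin_of_isOpen isOpen_Ioo hx]
  exact (hmono.mono Ioo_subset_Icc_self).derivWithin_nonneg

theorem MonotoneOn.lintegral_ofReal_deriv_eq_sub (hmono : MonotoneOn u (Icc a b)) (hab : a ≤ b)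
    (hcont : ContinuousOn u (Icc a b)) (hdiff : ∀ x ∈ Ioo a b, DifferentiableAt ℝ u x) :
    ∫⁻ t in Ioo a b, ENNReal.ofReal (deriv u t) = ENNReal.ofReal (u b - u a) := by
  have hpos : ∀ x ∈ Ioo a b, 0 ≤ deriv u x := fun x hx => hmono.deriv_nonneg_of_mem_Ioo hx
  have hint : IntegrableOn (deriv u) (Ioc a b) :=
    intervalIntegral.integrableOn_deriv_of_nonneg hcont (fun x hx => (hdiff x hx).hasDerivAt) hpos
  rw [← ofReal_integral_eq_lintegral_ofReal (hint.mono_set Ioo_subset_Ioc_self)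
      ((ae_restrict_iff' measurableSet_Ioo).2 (Filter.Eventually.of_forall hpos)),
    ← integral_Ioc_eq_integral_Ioo, ← intervalIntegral.integral_of_le hab,
    intervalIntegral.integral_eq_sub_of_hasDerivAt_of_le hab hcont
      (fun x hx => (hdiff x hx).hasDerivAt)
      ((intervalIntegrable_iff_integrableOn_Ioc_of_le hab).2 hint)]

theorem MonotoneOn.ofReal_mul_add_ofReal_sub_le_lintegral_add_deriv
    (hmono : MonotoneOn u (Icc a b)) (hab : a ≤ b)
    (hcont : ContinuousOn u (Icc a b)) (hdiff : ∀ x ∈ Ioo a b, DifferentiableAt ℝ u x)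
    (hnonneg : ∀ x ∈ Icc a b, 0 ≤ u x) :
    ENNReal.ofReal (u a * (b - a)) + ENNReal.ofReal (u b - u a) ≤
      ∫⁻ t in Ioo a b, ENNReal.ofReal (u t + deriv u t) := by
  have hsplit : ∫⁻ t in Ioo a b, ENNReal.ofReal (u t + deriv u t) =
      (∫⁻ t in Ioo a b, ENNReal.ofReal (u t)) +
        ∫⁻ t in Ioo a b, ENNReal.ofReal (deriv u t) := by
    rw [← lintegral_add_right _ (measurable_deriv u).ennreal_ofReal]
    refine setLIntegral_congr_fun measurableSet_Ioo fun t ht => ?_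
    exact ENNReal.ofReal_add (hnonneg t (Ioo_subset_Icc_self ht))
      (hmono.deriv_nonneg_of_mem_Ioo ht)
  have hmean : ENNReal.ofReal (u a * (b - a)) ≤ ∫⁻ t in Ioo a b, ENNReal.ofReal (u t) := by
    calc ENNReal.ofReal (u a * (b - a)) = ∫⁻ _ in Ioo a b, ENNReal.ofReal (u a) := by
          rw [setLIntegral_const, Real.volume_Ioo,
            ENNReal.ofReal_mul (hnonneg a (left_mem_Icc.2 hab))]
      _ ≤ ∫⁻ t in Ioo a b, ENNReal.ofReal (u t) :=
          setLIntegral_mono' measurableSet_Ioo fun t ht => ENNReal.ofReal_le_ofReal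
            (hmono (left_mem_Icc.2 hab) (Ioo_subset_Icc_self ht) ht.1.le)
  rw [hsplit, hmono.lintegral_ofReal_deriv_eq_sub hab hcont hdiff]
  exact add_le_add_left hmean _

end

theorem lintegral_Ioo_le_inv_pow_mul_lintegral_mul_pow {f : ℝ → ℝ} {a b : ℝ} (ha : 0 < a)
    (k : ℕ) (hf : ∀ t ∈ Ioo a b, 0 ≤ f t) :
    ∫⁻ t in Ioo a b, ENNReal.ofReal (f t) ≤
      ENNReal.ofReal ((a ^ k)⁻¹) * ∫⁻ t in Ioo a b, ENNReal.ofReal (f t * t ^ k) := by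
  rw [← lintegral_const_mul' _ _ ENNReal.ofReal_ne_top]
  refine setLIntegral_mono' measurableSet_Ioo fun t ht => ?_
  rw [← ENNReal.ofReal_mul (by positivity)]
  refine ENNReal.ofReal_le_ofReal ?_
  have hak : a ^ k ≤ t ^ k := pow_le_pow_left₀ ha.le ht.1.le k
  calc f t = (a ^ k)⁻¹ * (f t * a ^ k) := by field_simp
    _ ≤ (a ^ k)⁻¹ * (f t * t ^ k) := by gcongr; exact hf t ht

theorem stmt_3_general (N : ℕ) :
    ∃ C > (0:ℝ), ∀ u : ℝ → ℝ,
      ContinuousOn u (Icc 0 1) →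
      (∀ r ∈ Ioo (0:ℝ) 1, DifferentiableAt ℝ u r) →
      (∀ r ∈ Icc (0:ℝ) 1, 0 ≤ u r) →
      MonotoneOn u (Icc 0 1) →
      ∀ r ∈ Icc (0:ℝ) 1,
        ENNReal.ofReal (u r) ≤
          ENNReal.ofReal C *
            ∫⁻ t in Ioo (0:ℝ) 1,
              ENNReal.ofReal ((u t + deriv u t) * t ^ (N - 1)) := by
  refine ⟨2 * 2 ^ (N - 1), by positivity, fun u hcont hdiff hnonneg hmono r hr => ?_⟩
  have hsub : Icc (1 / 2 : ℝ) 1 ⊆ Icc 0 1 := Icc_subset_Icc_left (by norm_num)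
  have hbound := (hmono.mono hsub).ofReal_mul_add_ofReal_sub_le_lintegral_add_deriv (by norm_num)
    (hcont.mono hsub) (fun x hx => hdiff x (Ioo_subset_Ioo_left (by norm_num) hx))
    (fun x hx => hnonneg x (hsub hx))
  have hweight := lintegral_Ioo_le_inv_pow_mul_lintegral_mul_pow (b := 1)
    (f := fun t => u t + deriv u t) (by norm_num : (0 : ℝ) < 1 / 2) (N - 1) fun t ht =>
      add_nonneg (hnonneg t (hsub (Ioo_subset_Icc_self ht)))
        ((hmono.mono hsub).deriv_nonneg_of_mem_Ioo ht)
  rw [one_div, inv_pow, inv_inv, ← one_div] at hweight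
  have hu : u (1 / 2) ≤ u 1 := hmono (by norm_num) (by norm_num) (by norm_num)
  calc ENNReal.ofReal (u r) ≤ ENNReal.ofReal (u 1) :=
        ENNReal.ofReal_le_ofReal (hmono hr (by norm_num) hr.2)
    _ ≤ ENNReal.ofReal 2 *
        (ENNReal.ofReal (u (1 / 2) * (1 - 1 / 2)) + ENNReal.ofReal (u 1 - u (1 / 2))) := by
        rw [← ENNReal.ofReal_add (by nlinarith [hnonneg (1 / 2) (by norm_num)]) (by linarith),
          ← ENNReal.ofReal_mul (by norm_num)]
        exact ENNReal.ofReal_le_ofReal (by linarith)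
    _ ≤ ENNReal.ofReal 2 * (ENNReal.ofReal (2 ^ (N - 1)) *
        ∫⁻ t in Ioo (1 / 2 : ℝ) 1, ENNReal.ofReal ((u t + deriv u t) * t ^ (N - 1))) :=
        mul_le_mul_right (hbound.trans hweight) _
    _ ≤ ENNReal.ofReal (2 * 2 ^ (N - 1)) *
        ∫⁻ t in Ioo (0 : ℝ) 1, ENNReal.ofReal ((u t + deriv u t) * t ^ (N - 1)) := by
        rw [← mul_assoc, ← ENNReal.ofReal_mul (by norm_num)]
        exact mul_le_mul_right (lintegral_mono_set (Ioo_subset_Ioo_left (by norm_num))) _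

/-- Embedding of the cone of nonnegative nondecreasing radial functions into `L^∞`:
`‖u‖_{L^∞(B)} ≤ C ‖u‖_{W^{1,1}(B)}`, written in radial coordinates with the weight
`r^{N-1}`, for a constant `C` depending only on the dimension `N`. -/
theorem stmt_3 (N : ℕ) (hN : 2 ≤ N) :
    ∃ C > (0:ℝ), ∀ u : ℝ → ℝ,
      ContinuousOn u (Icc 0 1) →
      (∀ r ∈ Ioo (0:ℝ) 1, DifferentiableAt ℝ u r) →
      (∀ r ∈ Icc (0:ℝ) 1, 0 ≤ u r) →
      MonotoneOn u (Icc 0 1) →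
      ∀ r ∈ Icc (0:ℝ) 1,
        ENNReal.ofReal (u r) ≤
          ENNReal.ofReal C *
            ∫⁻ t in Ioo (0:ℝ) 1,
              ENNReal.ofReal ((u t + deriv u t) * t ^ (N - 1)) :=
  stmt_3_general N
end

section
/- Let N ≥ 3. For each positive integer n define u_n : (0,1] → ℝ by u_n(r) = r^{1/n}. Then: (i) lim_{n→∞} [ ∫₀¹ ((1/n)·r^{1/n − 1})² r^{N−1} dr + ∫₀¹ (r^{1/n} − 1)² r^{N−1} dr ] = 0; and (ii) for every n, sup_{r ∈ (0,1)} |r^{1/n} − 1| = 1. In particular, u_n converges to the constant function 1 in the H¹-norm on the unit ball of ℝ^N while ‖u_n − 1‖_{L^∞} ≥ 1 for all n. -/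
/-! With `x = 1/n`, both integrals have closed forms, `x² / (2x + N - 2)` and
`1/(2x + N) - 2/(x + N) + 1/N`, which tend to `0` as `x → 0⁺`. For the sup, `r ↦ |r ^ x - 1|`
maps `(0, 1)` onto `(0, 1)` for every `x > 0`. -/

open Set Filter Topology intervalIntegral

theorem integral_mul_rpow_sub_one_sq_mul_pow {x : ℝ} {c : ℕ} (h : 1 < 2 * x + c) :
    ∫ r in (0:ℝ)..1, (x * r ^ (x - 1)) ^ 2 * r ^ c = x ^ 2 / (2 * x + c - 1) := by
  have hpow : EqOn (fun r : ℝ => (x * r ^ (x - 1)) ^ 2 * r ^ c)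
      (fun r => x ^ 2 * r ^ (2 * x - 2 + c)) (Ioo 0 1) := fun r hr => by
    dsimp only
    rw [show 2 * x - 2 + c = (x - 1) * 2 + (c:ℝ) by ring, Real.rpow_add hr.1,
      Real.rpow_mul hr.1.le, Real.rpow_two, Real.rpow_natCast]
    ring
  rw [integral_congr_Ioo_of_le zero_le_one hpow, integral_const_mul,
    integral_rpow (Or.inl (by linarith)), Real.one_rpow, Real.zero_rpow (by linarith)]
  field_simp
  ring

theorem integral_rpow_sub_one_sq_mul_pow {x : ℝ} {c : ℕ} (h : -1 < 2 * x + c) :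
    ∫ r in (0:ℝ)..1, (r ^ x - 1) ^ 2 * r ^ c
      = 1 / (2 * x + c + 1) - 2 / (x + c + 1) + 1 / (c + 1) := by
  have hc : (0:ℝ) ≤ c := c.cast_nonneg
  have hpow : EqOn (fun r : ℝ => (r ^ x - 1) ^ 2 * r ^ c)
      (fun r => r ^ (2 * x + c) - 2 * r ^ (x + c) + r ^ (c:ℝ)) (Ioo 0 1) := fun r hr => by
    rw [mul_comm 2 x]
    simp only [Real.rpow_add hr.1, Real.rpow_natCast, Real.rpow_mul hr.1.le, Real.rpow_two]
    ring
  have hint : ∀ a : ℝ, -1 < a →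
      IntervalIntegrable (fun r : ℝ => r ^ a) MeasureTheory.volume 0 1 :=
    fun _ => intervalIntegrable_rpow'
  have h2 : -1 < x + c := by linarith
  have h3 : -1 < (c:ℝ) := by linarith
  rw [integral_congr_Ioo_of_le zero_le_one hpow,
    integral_add ((hint _ h).sub ((hint _ h2).const_mul 2)) (hint _ h3),
    integral_sub (hint _ h) ((hint _ h2).const_mul 2), integral_const_mul,
    integral_rpow (Or.inl h), integral_rpow (Or.inl h2), integral_rpow (Or.inl h3)]
  simp only [Real.one_rpow, Real.zero_rpow (by linarith : 2 * x + c + 1 ≠ 0),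
    Real.zero_rpow (by linarith : x + c + 1 ≠ 0),
    Real.zero_rpow (by linarith : (c:ℝ) + 1 ≠ 0)]
  ring

theorem tendsto_integral_mul_rpow_sub_one_sq_mul_pow {c : ℕ} (hc : 1 ≤ c) :
    Tendsto (fun x : ℝ => ∫ r in (0:ℝ)..1, (x * r ^ (x - 1)) ^ 2 * r ^ c)
      (𝓝[>] 0) (𝓝 0) := by
  have hc1 : (1:ℝ) ≤ c := by exact_mod_cast hc
  have hbound : ∀ᶠ x in 𝓝[>] (0:ℝ),
      0 ≤ ∫ r in (0:ℝ)..1, (x * r ^ (x - 1)) ^ 2 * r ^ c ∧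
        ∫ r in (0:ℝ)..1, (x * r ^ (x - 1)) ^ 2 * r ^ c ≤ x / 2 := by
    filter_upwards [self_mem_nhdsWithin] with x (hx : 0 < x)
    rw [integral_mul_rpow_sub_one_sq_mul_pow (by linarith)]
    refine ⟨div_nonneg (sq_nonneg x) (by linarith), ?_⟩
    rw [div_le_div_iff₀ (by linarith) two_pos]
    nlinarith
  have hlim : Tendsto (fun x : ℝ => x / 2) (𝓝[>] 0) (𝓝 0) := by
    simpa using (continuous_id.div_const (2:ℝ)).continuousAt.tendsto.mono_left
      (nhdsWithin_le_nhds (a := 0) (s := Ioi 0))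
  exact tendsto_of_tendsto_of_tendsto_of_le_of_le' tendsto_const_nhds hlim
    (hbound.mono fun _ h => h.1) (hbound.mono fun _ h => h.2)

theorem tendsto_integral_rpow_sub_one_sq_mul_pow (c : ℕ) :
    Tendsto (fun x : ℝ => ∫ r in (0:ℝ)..1, (r ^ x - 1) ^ 2 * r ^ c) (𝓝[>] 0) (𝓝 0) := by
  have hc : (0:ℝ) < c + 1 := by positivity
  have hcont : ContinuousAt
      (fun x : ℝ => 1 / (2 * x + c + 1) - 2 / (x + c + 1) + 1 / (c + 1)) 0 := by
    refine ContinuousAt.add (ContinuousAt.sub ?_ ?_) continuousAt_const <;>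
      exact ContinuousAt.div (by fun_prop) (by fun_prop) (by simpa using hc.ne')
  have hzero : 1 / (2 * 0 + c + 1) - 2 / (0 + c + 1) + 1 / ((c:ℝ) + 1) = 0 := by ring
  refine Tendsto.congr' ?_ (hzero ▸ hcont.tendsto.mono_left nhdsWithin_le_nhds)
  filter_upwards [self_mem_nhdsWithin] with x (hx : 0 < x)
  exact (integral_rpow_sub_one_sq_mul_pow (by linarith)).symm

theorem image_abs_rpow_sub_one_Ioo {x : ℝ} (hx : 0 < x) :
    (fun r : ℝ => |r ^ x - 1|) '' Ioo 0 1 = Ioo 0 1 := by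
  ext s
  constructor
  · rintro ⟨r, hr, rfl⟩
    have hlt : r ^ x < 1 := Real.rpow_lt_one hr.1.le hr.2 hx
    dsimp only
    rw [abs_of_neg (by linarith)]
    exact ⟨by linarith, by linarith [Real.rpow_pos_of_pos hr.1 x]⟩
  · intro hs
    refine ⟨(1 - s) ^ x⁻¹, ⟨?_, ?_⟩, ?_⟩
    · exact Real.rpow_pos_of_pos (by linarith [hs.2]) _
    · exact Real.rpow_lt_one (by linarith [hs.2]) (by linarith [hs.1]) (inv_pos.2 hx)
    · dsimp only
      rw [Real.rpow_inv_rpow (by linarith [hs.2]) hx.ne', sub_sub_cancel_left, abs_neg,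
        abs_of_pos hs.1]

/-- The sequence `u_n(r) = r^{1/n}` converges in `H¹` of the unit ball of `ℝ^N`
(`N ≥ 3`) to the constant function `1`, while `‖u_n - 1‖_{L^∞} = 1` for all `n`:
the embedding of the cone into `L^∞` is not continuous. -/
theorem stmt_4 (N : ℕ) (hN : 3 ≤ N) :
    Filter.Tendsto
      (fun n : ℕ =>
        (∫ r in (0:ℝ)..1, ((1 / (n : ℝ)) * r ^ ((1:ℝ)/n - 1)) ^ 2 * r ^ (N - 1)) +
        ∫ r in (0:ℝ)..1, (r ^ ((1:ℝ)/n) - 1) ^ 2 * r ^ (N - 1))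
      Filter.atTop (nhds 0) ∧
    ∀ n : ℕ, 1 ≤ n →
      sSup ((fun r : ℝ => |r ^ ((1:ℝ)/n) - 1|) '' Ioo 0 1) = 1 := by
  refine ⟨?_, fun n hn => ?_⟩
  · have hinv : Tendsto (fun n : ℕ => 1 / (n : ℝ)) atTop (𝓝[>] 0) := by
      simpa only [one_div, Function.comp_def] using
        tendsto_inv_atTop_nhdsGT_zero.comp tendsto_natCast_atTop_atTop
    have hlim := (tendsto_integral_mul_rpow_sub_one_sq_mul_pow (by omega : 1 ≤ N - 1)).add
      (tendsto_integral_rpow_sub_one_sq_mul_pow (N - 1))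
    simpa only [add_zero, Function.comp_def] using hlim.comp hinv
  · rw [image_abs_rpow_sub_one_Ioo (one_div_pos.2 (by exact_mod_cast hn)), csSup_Ioo zero_lt_one]
end

section
/- Let N ≥ 2. Let b : [0,1] → ℝ be continuous and nonpositive, such that r ↦ r·b(r) is continuously differentiable on (0,1) with (d/dr)(b(r)·r) > −1 − (N−1)/r² for all r ∈ (0,1). Let w : [0,1] → ℝ be continuous on [0,1], differentiable on (0,1) with w'(r) ≥ 0 for all r ∈ (0,1). Let v : [0,1] → ℝ be continuous on [0,1], with v' continuous on [0,1], v three times differentiable on (0,1), satisfying v'(0) = v'(1) = 0 and −v''(r) + (b(r)·r − (N−1)/r)·v'(r) + v(r) = w(r) for all r ∈ (0,1). Then v'(r) ≥ 0 for all r ∈ [0,1], i.e. v is nondecreasing. -/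
open Set Filter Topology

/-!
Suppose `v'` is somewhere negative. It vanishes at both ends, so it attains a negative minimum
at some `r₀ ∈ (0,1)`, where `v''(r₀) = 0` and `v'''(r₀) ≥ 0`. Differentiating the equation gives
`v''' = (1 + (r b(r))' + (N-1)/r²) v' + (r b(r) - (N-1)/r) v'' - w'`; at `r₀` the middle term vanishes,
the coefficient of `v'` is positive by the assumption on `(r b(r))'`, and `w' ≥ 0`, so `v'''(r₀) < 0`.
-/

theorem IsLocalMin.deriv2_nonneg {f f' : ℝ → ℝ} {x f'' : ℝ}
    (hmin : IsLocalMin f x) (hf : ∀ᶠ y in 𝓝 x, HasDerivAt f (f' y) y)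
    (hf' : HasDerivAt f' f'' x) : 0 ≤ f'' := by
  -- if `f'' < 0`, the second derivative test makes `x` a local maximum too, so `f` is flat near `x`
  by_contra! hneg
  have hderiv : deriv f =ᶠ[𝓝 x] f' := hf.mono fun y hy => hy.deriv
  have hmax : IsLocalMax f x := by
    refine isLocalMax_of_deriv_deriv_neg ?_ ?_ hf.self_of_nhds.continuousAt
    · rwa [(hf'.congr_of_eventuallyEq hderiv).deriv]
    · rw [hderiv.eq_of_nhds]; exact hmin.hasDerivAt_eq_zero hf.self_of_nhds
  have hconst : f =ᶠ[𝓝 x] fun _ => f x := hmin.mp (hmax.mono fun y h₁ h₂ => le_antisymm h₁ h₂)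
  have hzero : f' =ᶠ[𝓝 x] fun _ => 0 := by
    filter_upwards [hconst.eventuallyEq_nhds, hf] with y hy hfy
    exact hfy.unique ((hasDerivAt_const y (f x)).congr_of_eventuallyEq hy)
  exact hneg.ne (hf'.unique ((hasDerivAt_const x (0 : ℝ)).congr_of_eventuallyEq hzero))

theorem ContinuousOn.nonneg_of_isLocalMin_nonneg {g : ℝ → ℝ} {a b : ℝ}
    (hg : ContinuousOn g (Icc a b)) (ha : 0 ≤ g a) (hb : 0 ≤ g b) (h : ∀ x ∈ Ioo a b, IsLocalMin g x → 0 ≤ g x) :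
    ∀ x ∈ Icc a b, 0 ≤ g x := by
  intro x hx
  obtain ⟨x₀, hx₀, hmin⟩ := isCompact_Icc.exists_isMinOn ⟨x, hx⟩ hg
  refine le_trans ?_ (hmin hx)
  rcases eq_endpoints_or_mem_Ioo_of_mem_Icc hx₀ with rfl | rfl | hx₀'
  · exact ha
  · exact hb
  · exact h x₀ hx₀' (hmin.isLocalMin (Icc_mem_nhds hx₀'.1 hx₀'.2))

theorem hasDerivAt_deriv2_of_ode {p v v' v'' w : ℝ → ℝ} {p' w' x : ℝ} {s : Set ℝ}
    (hs : s ∈ 𝓝 x) (heq : ∀ y ∈ s, -v'' y + p y * v' y + v y = w y)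
    (hp : HasDerivAt p p' x) (hv : HasDerivAt v (v' x) x) (hv' : HasDerivAt v' (v'' x) x)
    (hw : HasDerivAt w w' x) :
    HasDerivAt v'' (p' * v' x + p x * v'' x + v' x - w') x := by
  refine ((hp.mul hv').add hv).sub hw |>.congr_of_eventuallyEq ?_
  filter_upwards [hs] with y hy
  simp only [Pi.sub_apply, Pi.add_apply, Pi.mul_apply]
  linarith [heq y hy]

theorem stmt_5_general (N : ℕ) (b w : ℝ → ℝ)
    (hrb_diff : ∀ r ∈ Ioo (0:ℝ) 1, DifferentiableAt ℝ (fun t => b t * t) r)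
    (hrb : ∀ r ∈ Ioo (0:ℝ) 1,
      -1 - ((N : ℝ) - 1) / r ^ 2 < deriv (fun t => b t * t) r)
    (w' : ℝ → ℝ)
    (hw_diff : ∀ r ∈ Ioo (0:ℝ) 1, HasDerivAt w (w' r) r)
    (hw' : ∀ r ∈ Ioo (0:ℝ) 1, 0 ≤ w' r)
    (v v' v'' v''' : ℝ → ℝ)
    (hv : ∀ r ∈ Icc (0:ℝ) 1, HasDerivWithinAt v (v' r) (Icc 0 1) r)
    (hv'_cont : ContinuousOn v' (Icc 0 1))
    (hv' : ∀ r ∈ Ioo (0:ℝ) 1, HasDerivAt v' (v'' r) r)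
    (hv'' : ∀ r ∈ Ioo (0:ℝ) 1, HasDerivAt v'' (v''' r) r)
    (hv'0 : v' 0 = 0) (hv'1 : v' 1 = 0)
    (heq : ∀ r ∈ Ioo (0:ℝ) 1,
      -v'' r + (b r * r - ((N : ℝ) - 1) / r) * v' r + v r = w r) :
    ∀ r ∈ Icc (0:ℝ) 1, 0 ≤ v' r := by
  refine hv'_cont.nonneg_of_isLocalMin_nonneg hv'0.ge hv'1.ge fun r hr hmin => ?_
  by_contra! hneg
  have hnhds : Ioo (0:ℝ) 1 ∈ 𝓝 r := Ioo_mem_nhds hr.1 hr.2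
  have hv''r : v'' r = 0 := hmin.hasDerivAt_eq_zero (hv' r hr)
  have hv'''_nonneg : 0 ≤ v''' r :=
    hmin.deriv2_nonneg (eventually_of_mem hnhds hv') (hv'' r hr)
  have hinv : HasDerivAt (fun t : ℝ => ((N:ℝ) - 1) / t) (-(((N:ℝ) - 1) / r ^ 2)) r := by
    simpa [div_eq_mul_inv, mul_neg] using (hasDerivAt_inv hr.1.ne').const_mul ((N:ℝ) - 1)
  have hv''' : v''' r = (deriv (fun t => b t * t) r + ((N:ℝ) - 1) / r ^ 2 + 1) * v' r - w' r := by
    have := hasDerivAt_deriv2_of_ode hnhds heq ((hrb_diff r hr).hasDerivAt.sub hinv)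
      ((hv r (Ioo_subset_Icc_self hr)).hasDerivAt (Icc_mem_nhds hr.1 hr.2)) (hv' r hr)
      (hw_diff r hr)
    rw [(hv'' r hr).unique this, hv''r]
    ring
  have hcoeff : 0 < deriv (fun t => b t * t) r + ((N:ℝ) - 1) / r ^ 2 + 1 := by
    linarith [hrb r hr]
  nlinarith [hw' r hr]

/-- The solution operator of the radial linear Neumann problem
`-v'' + (b(r)r - (N-1)/r) v' + v = w`, `v'(0) = v'(1) = 0`, maps nondecreasing data
to nondecreasing solutions: if `w' ≥ 0` on `(0,1)` then `v' ≥ 0` on `[0,1]`. -/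
theorem stmt_5 (N : ℕ) (hN : 2 ≤ N) (b w : ℝ → ℝ)
    (hb_cont : ContinuousOn b (Icc 0 1))
    (hb_nonpos : ∀ r ∈ Icc (0:ℝ) 1, b r ≤ 0)
    (hrb_diff : ∀ r ∈ Ioo (0:ℝ) 1, DifferentiableAt ℝ (fun t => b t * t) r)
    (hrb_cont : ContinuousOn (deriv (fun t => b t * t)) (Ioo 0 1))
    (hrb : ∀ r ∈ Ioo (0:ℝ) 1,
      -1 - ((N : ℝ) - 1) / r ^ 2 < deriv (fun t => b t * t) r)
    (hw_cont : ContinuousOn w (Icc 0 1))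
    (w' : ℝ → ℝ)
    (hw_diff : ∀ r ∈ Ioo (0:ℝ) 1, HasDerivAt w (w' r) r)
    (hw' : ∀ r ∈ Ioo (0:ℝ) 1, 0 ≤ w' r)
    (v v' v'' v''' : ℝ → ℝ)
    (hv_cont : ContinuousOn v (Icc 0 1))
    (hv : ∀ r ∈ Icc (0:ℝ) 1, HasDerivWithinAt v (v' r) (Icc 0 1) r)
    (hv'_cont : ContinuousOn v' (Icc 0 1))
    (hv' : ∀ r ∈ Ioo (0:ℝ) 1, HasDerivAt v' (v'' r) r)
    (hv'' : ∀ r ∈ Ioo (0:ℝ) 1, HasDerivAt v'' (v''' r) r)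
    (hv'0 : v' 0 = 0) (hv'1 : v' 1 = 0)
    (heq : ∀ r ∈ Ioo (0:ℝ) 1,
      -v'' r + (b r * r - ((N : ℝ) - 1) / r) * v' r + v r = w r) :
    ∀ r ∈ Icc (0:ℝ) 1, 0 ≤ v' r :=
  stmt_5_general N b w hrb_diff hrb w' hw_diff hw' v v' v'' v''' hv hv'_cont hv' hv'' hv'0 hv'1 heq
end

section
/- Let N ≥ 2. Let b : [0,1] → ℝ be continuous and nonpositive such that r ↦ r·b(r) is differentiable on (0,1) with (d/dr)(b(r)·r) > −1 − (N−1)/r² for all r ∈ (0,1). Let v : [0,1] → ℝ be continuously differentiable on [0,1], twice continuously differentiable on (0,1], with v'(0) = v'(1) = 0 and −v''(r) + (b(r)·r − (N−1)/r)·v'(r) + v(r) = 0 for all r ∈ (0,1). Then v(r) = 0 for all r ∈ [0,1]. -/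
/-!
With `B' = r b(r)`, the integrating factor `φ(r) = r^(N-1) e^(-B(r))` puts the equation in
divergence form `(φ v')' = φ v`. Hence `E = φ v' v` satisfies `E' = φ (v² + v'²) ≥ 0`, while the
Neumann conditions give `E(0) = E(1) = 0`; so `E ≡ 0`, and then `v ≡ 0`.
-/

open Set Real

theorem ContinuousOn.exists_hasDerivAt_of_mem_Icc {f : ℝ → ℝ} {a b : ℝ} (hab : a ≤ b)
    (hf : ContinuousOn f (Icc a b)) : ∃ F : ℝ → ℝ, ∀ x ∈ Icc a b, HasDerivAt F (f x) x := by
  have hext : Continuous (IccExtend hab ((Icc a b).domRestrict f)) :=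
    (continuousOn_iff_continuous_domRestrict.1 hf).Icc_extend'
  refine ⟨fun u => ∫ x in a..u, IccExtend hab ((Icc a b).domRestrict f) x, fun x hx => ?_⟩
  exact (hext.integral_hasStrictDerivAt a x).hasDerivAt.congr_deriv
    (by rw [IccExtend_of_mem _ _ hx]; rfl)

theorem hasDerivAt_pow_mul_exp_neg_mul {k : ℕ} {G u : ℝ → ℝ} {g u' r : ℝ} (hr : r ≠ 0)
    (hG : HasDerivAt G g r) (hu : HasDerivAt u u' r) :
    HasDerivAt (fun x => x ^ k * exp (-G x) * u x)
      (r ^ k * exp (-G r) * (u' - (g - k / r) * u r)) r := by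
  refine (((hasDerivAt_pow k r).mul hG.neg.exp).mul hu).congr_deriv ?_
  rcases k with _ | k
  · simp only [pow_zero, one_mul, Pi.mul_apply, Pi.neg_apply]
    ring
  · simp only [Pi.mul_apply, Nat.add_sub_cancel, Pi.neg_apply]
    field_simp
    push_cast
    ring

theorem eqOn_zero_of_hasDerivAt_weight_mul_deriv {φ v v' : ℝ → ℝ} {a b : ℝ} (hab : a < b)
    (hφ : ContinuousOn φ (Icc a b)) (hφ_pos : ∀ x ∈ Ioo a b, 0 < φ x)
    (hv : ContinuousOn v (Icc a b)) (hv' : ContinuousOn v' (Icc a b))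
    (hv_deriv : ∀ x ∈ Ioo a b, HasDerivAt v (v' x) x)
    (hw_deriv : ∀ x ∈ Ioo a b, HasDerivAt (fun y => φ y * v' y) (φ x * v x) x)
    (ha : v' a = 0) (hb : v' b = 0) : EqOn v 0 (Icc a b) := by
  set E := fun x => φ x * v' x * v x
  have hE_deriv : ∀ x ∈ Ioo a b, HasDerivAt E (φ x * (v x ^ 2 + v' x ^ 2)) x := fun x hx =>
    ((hw_deriv x hx).mul (hv_deriv x hx)).congr_deriv (by ring)
  have hE_mono : MonotoneOn E (Icc a b) := by
    refine monotoneOn_of_hasDerivWithinAt_nonneg (f' := fun x => φ x * (v x ^ 2 + v' x ^ 2))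
      (convex_Icc a b) ((hφ.mul hv').mul hv)
      (fun x hx => ?_) (fun x hx => ?_) <;> rw [interior_Icc] at hx
    · exact (hE_deriv x hx).hasDerivWithinAt
    · exact mul_nonneg (hφ_pos x hx).le (by positivity)
  have hE_zero : EqOn E 0 (Icc a b) := fun x hx => le_antisymm
    (by simpa [E, hb] using hE_mono hx (right_mem_Icc.2 hab.le) hx.2)
    (by simpa [E, ha] using hE_mono (left_mem_Icc.2 hab.le) hx hx.1)
  have hv_Ioo : EqOn v 0 (Ioo a b) := fun x hx => by
    have hE_const : E =ᶠ[nhds x] fun _ => 0 :=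
      Filter.eventually_of_mem (Icc_mem_nhds hx.1 hx.2) hE_zero
    have := (hE_deriv x hx).unique ((hasDerivAt_const x (0 : ℝ)).congr_of_eventuallyEq hE_const)
    have hsq : v x ^ 2 + v' x ^ 2 = 0 := (mul_eq_zero.1 this).resolve_left (hφ_pos x hx).ne'
    exact pow_eq_zero_iff two_ne_zero |>.1 (by nlinarith [sq_nonneg (v' x)])
  exact hv_Ioo.of_subset_closure hv continuousOn_const Ioo_subset_Icc_self
    (closure_Ioo hab.ne).ge

theorem stmt_6_general (N : ℕ) (hN : 2 ≤ N) (b : ℝ → ℝ)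
    (hb_cont : ContinuousOn b (Icc 0 1))
    (v v' v'' : ℝ → ℝ)
    (hv : ∀ r ∈ Icc (0:ℝ) 1, HasDerivWithinAt v (v' r) (Icc 0 1) r)
    (hv'_cont : ContinuousOn v' (Icc 0 1))
    (hv' : ∀ r ∈ Ioc (0:ℝ) 1, HasDerivWithinAt v' (v'' r) (Ioc 0 1) r)
    (hv'0 : v' 0 = 0) (hv'1 : v' 1 = 0)
    (heq : ∀ r ∈ Ioo (0:ℝ) 1,
      -v'' r + (b r * r - ((N : ℝ) - 1) / r) * v' r + v r = 0) :
    ∀ r ∈ Icc (0:ℝ) 1, v r = 0 := by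
  obtain ⟨G, hG⟩ := (hb_cont.mul continuousOn_id).exists_hasDerivAt_of_mem_Icc zero_le_one
  have hG_cont : ContinuousOn G (Icc 0 1) := fun r hr => (hG r hr).continuousAt.continuousWithinAt
  have hN_cast : ((N - 1 : ℕ) : ℝ) = N - 1 := by rw [Nat.cast_sub (by omega), Nat.cast_one]
  have hv_deriv : ∀ r ∈ Ioo (0:ℝ) 1, HasDerivAt v (v' r) r := fun r hr =>
    (hv r (Ioo_subset_Icc_self hr)).hasDerivAt (Icc_mem_nhds hr.1 hr.2)
  have hflux : ∀ r ∈ Ioo (0:ℝ) 1, HasDerivAt (fun x => x ^ (N - 1) * exp (-G x) * v' x)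
      (r ^ (N - 1) * exp (-G r) * v r) r := by
    intro r hr
    have hode : v'' r - (b r * r - ((N : ℝ) - 1) / r) * v' r = v r := by linarith [heq r hr]
    refine (hasDerivAt_pow_mul_exp_neg_mul hr.1.ne' (hG r (Ioo_subset_Icc_self hr))
      ((hv' r (Ioo_subset_Ioc_self hr)).hasDerivAt (Ioc_mem_nhds hr.1 hr.2))).congr_deriv ?_
    rw [hN_cast]
    exact congrArg _ hode
  exact eqOn_zero_of_hasDerivAt_weight_mul_deriv (φ := fun x => x ^ (N - 1) * exp (-G x))
    zero_lt_one ((continuousOn_pow _).mul hG_cont.neg.rexp) (fun r hr => by have := hr.1; positivity)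
    (fun r hr => (hv r hr).continuousWithinAt) hv'_cont hv_deriv hflux hv'0 hv'1

/-- Injectivity of the radial Neumann operator `L = -Δ + b(|x|) x·∇ + Id`:
the homogeneous equation `-v'' + (b(r)r - (N-1)/r) v' + v = 0` on `(0,1)` with
`v'(0) = v'(1) = 0` only admits the trivial solution. -/
theorem stmt_6 (N : ℕ) (hN : 2 ≤ N) (b : ℝ → ℝ)
    (hb_cont : ContinuousOn b (Icc 0 1))
    (hb_nonpos : ∀ r ∈ Icc (0:ℝ) 1, b r ≤ 0)
    (hrb_diff : ∀ r ∈ Ioo (0:ℝ) 1, DifferentiableAt ℝ (fun t => b t * t) r)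
    (hrb : ∀ r ∈ Ioo (0:ℝ) 1,
      -1 - ((N : ℝ) - 1) / r ^ 2 < deriv (fun t => b t * t) r)
    (v v' v'' : ℝ → ℝ)
    (hv : ∀ r ∈ Icc (0:ℝ) 1, HasDerivWithinAt v (v' r) (Icc 0 1) r)
    (hv'_cont : ContinuousOn v' (Icc 0 1))
    (hv' : ∀ r ∈ Ioc (0:ℝ) 1, HasDerivWithinAt v' (v'' r) (Ioc 0 1) r)
    (hv''_cont : ContinuousOn v'' (Ioc 0 1))
    (hv'0 : v' 0 = 0) (hv'1 : v' 1 = 0)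
    (heq : ∀ r ∈ Ioo (0:ℝ) 1,
      -v'' r + (b r * r - ((N : ℝ) - 1) / r) * v' r + v r = 0) :
    ∀ r ∈ Icc (0:ℝ) 1, v r = 0 :=
  stmt_6_general N hN b hb_cont v v' v'' hv hv'_cont hv' hv'0 hv'1 heq
end

section
/- Let N ≥ 2. Let a : [0,1] → ℝ be continuously differentiable, nondecreasing, with a(0) > 0; let b : [0,1] → ℝ be continuous and nonpositive with (d/dr)(b(r)·r) > −1 − (N−1)/r² on (0,1); let f : [0,∞) → ℝ be continuously differentiable and nondecreasing with f(0) = 0, f'(0) = 0, and liminf_{s→+∞} f(s)/s > 1/a(0). Then: (i) there exists λ̄ ≥ 0 such that for every λ > λ̄ there is no nonnegative nondecreasing function u : [0,1] → ℝ, continuously differentiable on [0,1] and twice differentiable on (0,1), with u'(0) = u'(1) = 0 and −u''(r) + (b(r)·r − (N−1)/r)·u'(r) + u(r) = a(r)·f(u(r)) + λ on (0,1); and (ii) there exists K₁ > 0 such that every such nonnegative nondecreasing solution u with parameter λ ∈ [0, λ̄] satisfies ∫₀¹ u(r) r^{N−1} dr ≤ K₁. -/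
open Set Filter

/-- `u` (with derivative `u'` and second derivative `u''`) is a nonnegative
nondecreasing radial solution of the Neumann problem
`-Δu + b(|x|) x·∇u + u = a(|x|) f(u) + lam` on the unit ball of `ℝ^N`,
written in radial coordinates. -/
def IsRadialSol (N : ℕ) (a b f : ℝ → ℝ) (lam : ℝ) (u u' u'' : ℝ → ℝ) : Prop :=
  (∀ r ∈ Set.Icc (0:ℝ) 1, 0 ≤ u r) ∧
  MonotoneOn u (Set.Icc 0 1) ∧
  (∀ r ∈ Set.Icc (0:ℝ) 1, HasDerivWithinAt u (u' r) (Set.Icc 0 1) r) ∧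
  ContinuousOn u' (Set.Icc 0 1) ∧
  (∀ r ∈ Set.Ioo (0:ℝ) 1, HasDerivAt u' (u'' r) r) ∧
  u' 0 = 0 ∧ u' 1 = 0 ∧
  ∀ r ∈ Set.Ioo (0:ℝ) 1,
    -u'' r + (b r * r - ((N : ℝ) - 1) / r) * u' r + u r = a r * f (u r) + lam

/-!
In divergence form the equation reads `(r^(N-1) u')' = (u + b r u' - a f(u) - λ) r^(N-1)`, so
integrating over `[0, 1]` and using `u'(0) = u'(1) = 0` gives
`∫ u r^(N-1) = ∫ (a f(u) + λ - b r u') r^(N-1)`. Since `u' ≥ 0`, `b ≤ 0`, `a ≥ a(0)` and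
`f(s) ≥ μ (s - s₀)` for some `μ > 1 / a(0)`, the right side is at least
`a(0) μ ∫ u r^(N-1) + (λ - a(0) μ s₀) / N`. Hence `(a(0) μ - 1) ∫ u r^(N-1) ≤ (a(0) μ s₀ - λ) / N`,
which is impossible for `λ > a(0) μ s₀` and bounds the integral otherwise.
-/

open MeasureTheory intervalIntegral

theorem exists_affine_le_of_lt_liminf {f : ℝ → ℝ} (hf_nonneg : ∀ s, 0 ≤ s → 0 ≤ f s) {m : ℝ}
    (hm₀ : 0 ≤ m) (hm : (m : EReal) < liminf (fun s : ℝ => ((f s / s : ℝ) : EReal)) atTop) :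
    ∃ μ > m, ∃ s₀ ≥ 0, ∀ s, 0 ≤ s → μ * (s - s₀) ≤ f s := by
  obtain ⟨μ, hmμ, hμ⟩ := EReal.lt_iff_exists_real_btwn.1 hm
  obtain ⟨s₁, hs₁⟩ := eventually_atTop.1 (eventually_lt_of_lt_liminf hμ)
  have hmμ : m < μ := EReal.coe_lt_coe_iff.1 hmμ
  refine ⟨μ, hmμ, max s₁ 1, by positivity, fun s hs => ?_⟩
  rcases le_or_gt (max s₁ 1) s with hle | hlt
  · have hspos : 0 < s := one_pos.trans_le ((le_max_right _ _).trans hle)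
    have hμs : μ < f s / s := EReal.coe_lt_coe_iff.1 (hs₁ s ((le_max_left _ _).trans hle))
    rw [lt_div_iff₀ hspos] at hμs
    nlinarith [le_max_right s₁ 1]
  · nlinarith [hf_nonneg s hs]

theorem integral_pow_pred {N : ℕ} (hN : 1 ≤ N) : ∫ r in (0:ℝ)..1, r ^ (N - 1) = 1 / N := by
  rw [integral_pow, Nat.sub_add_cancel hN, Nat.cast_sub hN]
  simp [Nat.pos_iff_ne_zero.1 hN]

namespace IsRadialSol

variable {N : ℕ} {a b f : ℝ → ℝ} {lam : ℝ} {u u' u'' : ℝ → ℝ}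

theorem continuousOn (h : IsRadialSol N a b f lam u u' u'') : ContinuousOn u (Icc 0 1) :=
  fun r hr => (h.2.2.1 r hr).continuousWithinAt

theorem deriv_nonneg (h : IsRadialSol N a b f lam u u' u'') {r : ℝ} (hr : r ∈ Icc (0:ℝ) 1) :
    0 ≤ u' r := by
  rw [← (h.2.2.1 r hr).derivWithin (uniqueDiffOn_Icc zero_lt_one r hr)]
  exact h.2.1.derivWithin_nonneg

theorem hasDerivAt_flux (hN : 1 ≤ N) (h : IsRadialSol N a b f lam u u' u'') {r : ℝ}
    (hr : r ∈ Ioo (0:ℝ) 1) :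
    HasDerivAt (fun r => u' r * r ^ (N - 1))
      (u r * r ^ (N - 1) - (a r * f (u r) + lam - b r * r * u' r) * r ^ (N - 1)) r := by
  have hpow := hasDerivAt_pow (N - 1) r
  refine ((h.2.2.2.2.1 r hr).mul hpow).congr_deriv ?_
  have hweight : ((N - 1 : ℕ) : ℝ) * r ^ (N - 1 - 1) = ((N : ℝ) - 1) / r * r ^ (N - 1) := by
    rcases eq_or_ne (N - 1) 0 with hN1 | hN1
    · simp [hN1, show (N : ℝ) = 1 by norm_cast; omega]
    · rw [Nat.cast_sub hN, Nat.cast_one, ← pow_sub_one_mul hN1 r]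
      field_simp [hr.1.ne']
  linear_combination (-(r ^ (N - 1))) * h.2.2.2.2.2.2.2 r hr + u' r * hweight

theorem integral_nonneg (h : IsRadialSol N a b f lam u u' u'') :
    0 ≤ ∫ r in (0:ℝ)..1, u r * r ^ (N - 1) :=
  intervalIntegral.integral_nonneg zero_le_one fun r hr =>
    mul_nonneg (h.1 r hr) (pow_nonneg hr.1 _)

theorem intervalIntegrable_weighted (h : IsRadialSol N a b f lam u u' u'') :
    IntervalIntegrable (fun r => u r * r ^ (N - 1)) volume 0 1 :=
  (h.continuousOn.mul (continuous_pow _).continuousOn).intervalIntegrable_of_Icc zero_le_one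

theorem intervalIntegrable_source (ha : ContinuousOn a (Icc 0 1)) (hb : ContinuousOn b (Icc 0 1))
    (hf : ContinuousOn f (Ici 0)) (h : IsRadialSol N a b f lam u u' u'') :
    IntervalIntegrable (fun r => (a r * f (u r) + lam - b r * r * u' r) * r ^ (N - 1)) volume 0 1 :=
  ((((ha.mul (hf.comp h.continuousOn h.1)).add continuousOn_const).sub
    ((hb.mul continuousOn_id).mul h.2.2.2.1)).mul (continuous_pow _).continuousOn
    ).intervalIntegrable_of_Icc zero_le_one

theorem integral_eq (hN : 1 ≤ N) (ha : ContinuousOn a (Icc 0 1)) (hb : ContinuousOn b (Icc 0 1))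
    (hf : ContinuousOn f (Ici 0)) (h : IsRadialSol N a b f lam u u' u'') :
    ∫ r in (0:ℝ)..1, u r * r ^ (N - 1) =
      ∫ r in (0:ℝ)..1, (a r * f (u r) + lam - b r * r * u' r) * r ^ (N - 1) := by
  have hint_src := h.intervalIntegrable_source ha hb hf
  have hFTC := integral_eq_sub_of_hasDeriv_right_of_le zero_le_one
    (h.2.2.2.1.mul (continuous_pow (N - 1)).continuousOn)
    (fun r hr => (h.hasDerivAt_flux hN hr).hasDerivWithinAt)
    (h.intervalIntegrable_weighted.sub hint_src)
  rw [integral_sub h.intervalIntegrable_weighted hint_src] at hFTC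
  simpa [h.2.2.2.2.2.1, h.2.2.2.2.2.2.1, sub_eq_zero] using hFTC

theorem le_integral_of_affine_le (hN : 1 ≤ N) (ha : ContinuousOn a (Icc 0 1))
    (ha_mono : MonotoneOn a (Icc 0 1)) (ha0 : 0 ≤ a 0) (hb : ContinuousOn b (Icc 0 1))
    (hb_nonpos : ∀ r ∈ Icc (0:ℝ) 1, b r ≤ 0) (hf : ContinuousOn f (Ici 0))
    (hf_nonneg : ∀ s, 0 ≤ s → 0 ≤ f s) {μ s₀ : ℝ} (hf_affine : ∀ s, 0 ≤ s → μ * (s - s₀) ≤ f s)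
    (h : IsRadialSol N a b f lam u u' u'') :
    a 0 * μ * (∫ r in (0:ℝ)..1, u r * r ^ (N - 1)) + (lam - a 0 * μ * s₀) / N ≤
      ∫ r in (0:ℝ)..1, u r * r ^ (N - 1) := by
  have hint_u := h.intervalIntegrable_weighted
  have hint_w : IntervalIntegrable (fun r : ℝ => r ^ (N - 1)) volume 0 1 :=
    intervalIntegrable_pow _
  have hpointwise : ∀ r ∈ Icc (0:ℝ) 1,
      a 0 * μ * (u r * r ^ (N - 1)) + (lam - a 0 * μ * s₀) * r ^ (N - 1) ≤
        (a r * f (u r) + lam - b r * r * u' r) * r ^ (N - 1) := by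
    intro r hr
    have ha_le : a 0 ≤ a r := ha_mono (left_mem_Icc.2 zero_le_one) hr hr.1
    have hfu := hf_nonneg _ (h.1 r hr)
    have hfu_affine := hf_affine _ (h.1 r hr)
    have hdrift : b r * r * u' r ≤ 0 :=
      mul_nonpos_of_nonpos_of_nonneg (mul_nonpos_of_nonpos_of_nonneg (hb_nonpos r hr) hr.1)
        (h.deriv_nonneg hr)
    have hw := pow_nonneg hr.1 (N - 1)
    nlinarith [mul_le_mul_of_nonneg_left hfu_affine ha0, mul_le_mul_of_nonneg_right ha_le hfu]
  calc a 0 * μ * (∫ r in (0:ℝ)..1, u r * r ^ (N - 1)) + (lam - a 0 * μ * s₀) / N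
      = ∫ r in (0:ℝ)..1, a 0 * μ * (u r * r ^ (N - 1)) + (lam - a 0 * μ * s₀) * r ^ (N - 1) := by
        rw [integral_add (hint_u.const_mul _) (hint_w.const_mul _),
          intervalIntegral.integral_const_mul, intervalIntegral.integral_const_mul,
          integral_pow_pred hN, mul_one_div]
    _ ≤ ∫ r in (0:ℝ)..1, (a r * f (u r) + lam - b r * r * u' r) * r ^ (N - 1) :=
        integral_mono_on zero_le_one ((hint_u.const_mul _).add (hint_w.const_mul _))
          (h.intervalIntegrable_source ha hb hf) hpointwise
    _ = ∫ r in (0:ℝ)..1, u r * r ^ (N - 1) := (h.integral_eq hN ha hb hf).symm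

end IsRadialSol

theorem stmt_7_general (N : ℕ) (hN : 2 ≤ N) (a b f : ℝ → ℝ)
    (ha_diff : ContDiffOn ℝ 1 a (Icc 0 1))
    (ha_mono : MonotoneOn a (Icc 0 1))
    (ha0 : 0 < a 0)
    (hb_cont : ContinuousOn b (Icc 0 1))
    (hb_nonpos : ∀ r ∈ Icc (0:ℝ) 1, b r ≤ 0)
    (hf_diff : ContDiffOn ℝ 1 f (Ici 0))
    (hf_mono : MonotoneOn f (Ici 0))
    (hf0 : f 0 = 0)
    (hf_liminf : ((1 / a 0 : ℝ) : EReal) <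
      Filter.liminf (fun s : ℝ => ((f s / s : ℝ) : EReal)) Filter.atTop) :
    ∃ lambar : ℝ, 0 ≤ lambar ∧
      (∀ lam : ℝ, lambar < lam →
        ∀ u u' u'' : ℝ → ℝ, ¬ IsRadialSol N a b f lam u u' u'') ∧
      ∃ K₁ > (0:ℝ), ∀ lam ∈ Icc (0:ℝ) lambar, ∀ u u' u'' : ℝ → ℝ,
        IsRadialSol N a b f lam u u' u'' →
        ∫ r in (0:ℝ)..1, u r * r ^ (N - 1) ≤ K₁ := by
  have hf_nonneg : ∀ s, 0 ≤ s → 0 ≤ f s := fun s hs => hf0 ▸ hf_mono self_mem_Ici hs hs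
  obtain ⟨μ, hμ, s₀, hs₀, hf_affine⟩ :=
    exists_affine_le_of_lt_liminf hf_nonneg (by positivity) hf_liminf
  have hA : 1 < a 0 * μ := (div_lt_iff₀' ha0).1 hμ
  have hNpos : (0:ℝ) < N := by positivity
  have hweighted : ∀ lam u u' u'', IsRadialSol N a b f lam u u' u'' →
      (N : ℝ) * ((a 0 * μ - 1) * ∫ r in (0:ℝ)..1, u r * r ^ (N - 1)) ≤ a 0 * μ * s₀ - lam :=
    fun lam u u' u'' h => by
      have hle := h.le_integral_of_affine_le (by omega) ha_diff.continuousOn ha_mono ha0.le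
        hb_cont hb_nonpos hf_diff.continuousOn hf_nonneg hf_affine
      have hdiv := div_mul_cancel₀ (lam - a 0 * μ * s₀) hNpos.ne'
      nlinarith
  refine ⟨a 0 * μ * s₀, by positivity, fun lam hlam u u' u'' h => ?_,
    a 0 * μ * s₀ / (N * (a 0 * μ - 1)) + 1, by positivity, fun lam hlam u u' u'' h => ?_⟩
  · have hpos := mul_nonneg hNpos.le (mul_nonneg (sub_pos.2 hA).le h.integral_nonneg)
    linarith [hweighted lam u u' u'' h]
  · have hbound :
        (∫ r in (0:ℝ)..1, u r * r ^ (N - 1)) ≤ a 0 * μ * s₀ / (N * (a 0 * μ - 1)) := by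
      rw [le_div_iff₀ (by nlinarith)]
      linarith [hweighted lam u u' u'' h, hlam.1]
    linarith

/-- Nonexistence of nonnegative nondecreasing radial solutions for large `λ`, and a
uniform `L¹` a priori bound for `λ ∈ [0, λ̄]`. -/
theorem stmt_7 (N : ℕ) (hN : 2 ≤ N) (a b f : ℝ → ℝ)
    (ha_diff : ContDiffOn ℝ 1 a (Icc 0 1))
    (ha_mono : MonotoneOn a (Icc 0 1))
    (ha0 : 0 < a 0)
    (hb_cont : ContinuousOn b (Icc 0 1))
    (hb_nonpos : ∀ r ∈ Icc (0:ℝ) 1, b r ≤ 0)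
    (hrb_diff : ∀ r ∈ Ioo (0:ℝ) 1, DifferentiableAt ℝ (fun t => b t * t) r)
    (hrb : ∀ r ∈ Ioo (0:ℝ) 1,
      -1 - ((N : ℝ) - 1) / r ^ 2 < deriv (fun t => b t * t) r)
    (hf_diff : ContDiffOn ℝ 1 f (Ici 0))
    (hf_mono : MonotoneOn f (Ici 0))
    (hf0 : f 0 = 0)
    (hf'0 : derivWithin f (Ici 0) 0 = 0)
    (hf_liminf : ((1 / a 0 : ℝ) : EReal) <
      Filter.liminf (fun s : ℝ => ((f s / s : ℝ) : EReal)) Filter.atTop) :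
    ∃ lambar : ℝ, 0 ≤ lambar ∧
      (∀ lam : ℝ, lambar < lam →
        ∀ u u' u'' : ℝ → ℝ, ¬ IsRadialSol N a b f lam u u' u'') ∧
      ∃ K₁ > (0:ℝ), ∀ lam ∈ Icc (0:ℝ) lambar, ∀ u u' u'' : ℝ → ℝ,
        IsRadialSol N a b f lam u u' u'' →
        ∫ r in (0:ℝ)..1, u r * r ^ (N - 1) ≤ K₁ :=
  stmt_7_general N hN a b f ha_diff ha_mono ha0 hb_cont hb_nonpos hf_diff hf_mono hf0 hf_liminf
end

section
/- Let N ≥ 2, λ ≥ 0. Let a : [0,1] → ℝ be continuously differentiable, nondecreasing, with a(0) > 0; let b : [0,1] → ℝ be continuous and nonpositive; let f : [0,∞) → ℝ be nondecreasing with f(0) = 0. Let u : [0,1] → ℝ be nonnegative, nondecreasing, continuously differentiable on [0,1] and twice differentiable on (0,1), with u'(0) = u'(1) = 0 and −u''(r) + (b(r)·r − (N−1)/r)·u'(r) + u(r) = a(r)·f(u(r)) + λ for all r ∈ (0,1). Then for every r ∈ (0,1), u'(r) ≤ r^{1−N} · ∫₀^r u(t) t^{N−1} dt. -/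
/-!
Multiplying the equation by `r^{N-1}` puts it in divergence form,
`(r^{N-1} u')' = r^{N-1} (u + b r u' - a f(u) - λ)`. Since `u` is nondecreasing, `u' ≥ 0`, so
`b r u' ≤ 0`; and `a f(u) ≥ a(0) f(0) = 0`, `λ ≥ 0`. Hence `(r^{N-1} u')' ≤ r^{N-1} u`, and
integrating from `0`, where `r^{N-1} u'` vanishes because `N ≥ 2`, gives the bound.
-/

open Set intervalIntegral

lemma HasDerivAt.pow_mul_radial {v : ℝ → ℝ} {v' s : ℝ} (m : ℕ) (hs : s ≠ 0)
    (hv : HasDerivAt v v' s) :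
    HasDerivAt (fun x => x ^ m * v x) (s ^ m * (v' + m / s * v s)) s := by
  refine ((hasDerivAt_pow m s).mul hv).congr_deriv ?_
  cases m with
  | zero => simp
  | succ k => field_simp; push_cast; ring

lemma pow_mul_le_integral_of_radial_le {v' v'' w : ℝ → ℝ} {m : ℕ} {r : ℝ} (hm : m ≠ 0)
    (hr : 0 ≤ r) (hv'_cont : ContinuousOn v' (Icc 0 r))
    (hv' : ∀ s ∈ Ioo 0 r, HasDerivAt v' (v'' s) s) (hw : ContinuousOn w (Icc 0 r))
    (hle : ∀ s ∈ Ioo 0 r, v'' s + m / s * v' s ≤ w s) :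
    r ^ m * v' r ≤ ∫ t in 0..r, w t * t ^ m := by
  have := sub_le_integral_of_hasDeriv_right_of_le hr ((continuousOn_pow m).mul hv'_cont)
    (fun s hs => ((hv' s hs).pow_mul_radial m hs.1.ne').hasDerivWithinAt)
    (hw.fun_mul (continuousOn_pow m)).integrableOn_Icc
    (fun s hs => by
      rw [mul_comm (w s)]
      exact mul_le_mul_of_nonneg_left (hle s hs) (pow_nonneg hs.1.le m))
  simpa [zero_pow hm] using this

lemma le_zpow_one_sub_mul_of_pow_mul_le {N : ℕ} {r x y : ℝ} (hN : 1 ≤ N) (hr : 0 < r)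
    (h : r ^ (N - 1) * x ≤ y) : x ≤ r ^ (1 - (N : ℤ)) * y := by
  have hzpow : r ^ (1 - (N : ℤ)) = (r ^ (N - 1))⁻¹ := by
    rw [← zpow_natCast, ← zpow_neg, Nat.cast_sub hN]
    ring_nf
  rw [hzpow, inv_mul_eq_div, le_div_iff₀ (pow_pos hr _), mul_comm]
  exact h

theorem stmt_9_general (N : ℕ) (hN : 2 ≤ N) (lam : ℝ) (hlam : 0 ≤ lam) (a b f : ℝ → ℝ)
    (ha_mono : MonotoneOn a (Icc 0 1))
    (ha0 : 0 < a 0)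
    (hb_nonpos : ∀ r ∈ Icc (0:ℝ) 1, b r ≤ 0)
    (hf_mono : MonotoneOn f (Ici 0))
    (hf0 : f 0 = 0)
    (u u' u'' : ℝ → ℝ)
    (hu_nonneg : ∀ r ∈ Icc (0:ℝ) 1, 0 ≤ u r)
    (hu_mono : MonotoneOn u (Icc 0 1))
    (hu : ∀ r ∈ Icc (0:ℝ) 1, HasDerivWithinAt u (u' r) (Icc 0 1) r)
    (hu'_cont : ContinuousOn u' (Icc 0 1))
    (hu' : ∀ r ∈ Ioo (0:ℝ) 1, HasDerivAt u' (u'' r) r)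
    (heq : ∀ r ∈ Ioo (0:ℝ) 1,
      -u'' r + (b r * r - ((N : ℝ) - 1) / r) * u' r + u r = a r * f (u r) + lam) :
    ∀ r ∈ Ioo (0:ℝ) 1,
      u' r ≤ r ^ (1 - (N : ℤ)) * ∫ t in (0:ℝ)..r, u t * t ^ (N - 1) := by
  intro r hr
  have hu'_nonneg : ∀ s ∈ Icc (0:ℝ) 1, 0 ≤ u' s := fun s hs =>
    (hu s hs).nonneg_of_monotoneOn (uniqueDiffOn_Icc_zero_one s hs).accPt hu_mono
  have hradial : ∀ s ∈ Ioo (0:ℝ) r, u'' s + ((N - 1 : ℕ) : ℝ) / s * u' s ≤ u s := by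
    intro s hs
    have hs₁ : s ∈ Ioo (0:ℝ) 1 := ⟨hs.1, hs.2.trans hr.2⟩
    have hs₂ : s ∈ Icc (0:ℝ) 1 := Ioo_subset_Icc_self hs₁
    have hfu : 0 ≤ a s * f (u s) :=
      mul_nonneg (ha0.trans_le (ha_mono (left_mem_Icc.2 zero_le_one) hs₂ hs₂.1)).le
        (hf0 ▸ hf_mono self_mem_Ici (hu_nonneg s hs₂) (hu_nonneg s hs₂))
    have hdrift : b s * s * u' s ≤ 0 :=
      mul_nonpos_of_nonpos_of_nonneg
        (mul_nonpos_of_nonpos_of_nonneg (hb_nonpos s hs₂) hs.1.le) (hu'_nonneg s hs₂)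
    rw [Nat.cast_sub (by omega), Nat.cast_one]
    linarith [heq s hs₁]
  have hsub : Icc 0 r ⊆ Icc (0:ℝ) 1 := Icc_subset_Icc_right hr.2.le
  refine le_zpow_one_sub_mul_of_pow_mul_le (by omega) hr.1 ?_
  exact pow_mul_le_integral_of_radial_le (by omega) hr.1.le (hu'_cont.mono hsub)
    (fun s hs => hu' s ⟨hs.1, hs.2.trans hr.2⟩)
    (fun x hx => (hu x (hsub hx)).continuousWithinAt.mono hsub) hradial

/-- Pointwise derivative bound for nonnegative nondecreasing radial solutions:
`u'(r) ≤ r^{1-N} ∫₀^r u(t) t^{N-1} dt` for `r ∈ (0,1)`. -/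
theorem stmt_9 (N : ℕ) (hN : 2 ≤ N) (lam : ℝ) (hlam : 0 ≤ lam) (a b f : ℝ → ℝ)
    (ha_diff : ContDiffOn ℝ 1 a (Icc 0 1))
    (ha_mono : MonotoneOn a (Icc 0 1))
    (ha0 : 0 < a 0)
    (hb_cont : ContinuousOn b (Icc 0 1))
    (hb_nonpos : ∀ r ∈ Icc (0:ℝ) 1, b r ≤ 0)
    (hf_mono : MonotoneOn f (Ici 0))
    (hf0 : f 0 = 0)
    (u u' u'' : ℝ → ℝ)
    (hu_nonneg : ∀ r ∈ Icc (0:ℝ) 1, 0 ≤ u r)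
    (hu_mono : MonotoneOn u (Icc 0 1))
    (hu : ∀ r ∈ Icc (0:ℝ) 1, HasDerivWithinAt u (u' r) (Icc 0 1) r)
    (hu'_cont : ContinuousOn u' (Icc 0 1))
    (hu' : ∀ r ∈ Ioo (0:ℝ) 1, HasDerivAt u' (u'' r) r)
    (hu'0 : u' 0 = 0) (hu'1 : u' 1 = 0)
    (heq : ∀ r ∈ Ioo (0:ℝ) 1,
      -u'' r + (b r * r - ((N : ℝ) - 1) / r) * u' r + u r = a r * f (u r) + lam) :
    ∀ r ∈ Ioo (0:ℝ) 1,
      u' r ≤ r ^ (1 - (N : ℤ)) * ∫ t in (0:ℝ)..r, u t * t ^ (N - 1) :=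
  stmt_9_general N hN lam hlam a b f ha_mono ha0 hb_nonpos hf_mono hf0 u u' u'' hu_nonneg hu_mono hu
    hu'_cont hu' heq
end

section
/- Let N ≥ 2. Let a : [0,1] → ℝ be continuously differentiable, nondecreasing, with a(0) > 0; let b : [0,1] → ℝ be continuous and nonpositive with (d/dr)(b(r)·r) > −1 − (N−1)/r² on (0,1); let f : [0,∞) → ℝ be continuously differentiable and nondecreasing with f(0) = 0 and f'(0) = 0. Then there exists a constant k₂ > 0 such that for every μ ∈ (0,1) and every nonnegative nondecreasing function u : [0,1] → ℝ, not identically zero, continuously differentiable on [0,1] and twice differentiable on (0,1), with u'(0) = u'(1) = 0 and −u''(r) + (b(r)·r − (N−1)/r)·u'(r) + u(r) = μ·a(r)·f(u(r)) on (0,1), one has ∫₀¹ (u'(r)² + u(r)²) r^{N−1} dr ≥ k₂². -/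
/-!
Since `f(s) = o(s)` at `0`, there is `δ > 0` with `μ a f(s) ≤ s / 2` for `0 ≤ s ≤ δ`.
With the weight `w(r) = r^(N-1) exp(-∫₀ʳ t b(t) dt)` the equation reads
`(w u')' = w (u - μ a f(u))`, so the Neumann conditions force `∫₀¹ w (u - μ a f(u)) = 0`.
A nontrivial nondecreasing solution with `u ≤ δ` would make this integrand nonnegative and
positive at `r = 1`; hence `u(1) > δ`. Finally `(r^N u²)' ≤ (N+1) r^(N-1) (u'² + u²)` on `[0,1]`
bounds `u(1)²` by `N + 1` times the weighted `H¹` integral, and `k₂ = δ / (N + 1)` works.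
-/

open Set Filter Topology MeasureTheory intervalIntegral

theorem exists_le_mul_of_hasDerivWithinAt_zero {f : ℝ → ℝ} (hf0 : f 0 = 0)
    (hf : HasDerivWithinAt f 0 (Ici 0) 0) {c : ℝ} (hc : 0 < c) :
    ∃ δ > 0, ∀ s ∈ Icc 0 δ, f s ≤ c * s := by
  have hlo : (fun s => f s) =o[𝓝[≥] 0] fun s => s := by
    simpa [hf0] using hf.isLittleO
  obtain ⟨δ, hδ, hsub⟩ := mem_nhdsGE_iff_exists_Icc_subset.1 (hlo.def hc)
  refine ⟨δ, hδ, fun s hs => ?_⟩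
  have hs' := hsub hs
  simp only [mem_ofPred_eq, Real.norm_eq_abs, abs_of_nonneg hs.1] at hs'
  exact (le_abs_self _).trans hs'

theorem intervalIntegral_pos_of_continuousOn_of_nonneg_of_pos_right {g : ℝ → ℝ} {a b : ℝ}
    (hab : a < b) (hg : ContinuousOn g (Icc a b)) (hg0 : ∀ x ∈ Icc a b, 0 ≤ g x)
    (hgb : 0 < g b) : 0 < ∫ x in a..b, g x := by
  have hpos : {x | 0 < g x} ∈ 𝓝[≤] b :=
    nhdsWithin_le_of_mem (Icc_mem_nhdsLE hab) (hg b (right_mem_Icc.2 hab.le) (Ioi_mem_nhds hgb))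
  obtain ⟨c, hcb, hc⟩ := (mem_nhdsLE_iff_exists_Ioc_subset' hab).1 hpos
  set m := max a c
  have ham : a ≤ m := le_max_left a c
  have hmb : m < b := max_lt hab hcb
  have hint : IntervalIntegrable g volume a b :=
    (hg.mono (uIcc_of_le hab.le).subset).intervalIntegrable
  have hsub : uIcc a m ⊆ uIcc a b ∧ uIcc m b ⊆ uIcc a b := by
    simp only [uIcc_of_le ham, uIcc_of_le hmb.le, uIcc_of_le hab.le]
    exact ⟨Icc_subset_Icc le_rfl hmb.le, Icc_subset_Icc ham le_rfl⟩
  rw [← integral_add_adjacent_intervals (hint.mono_set hsub.1) (hint.mono_set hsub.2)]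
  refine add_pos_of_nonneg_of_pos ?_ ?_
  · exact integral_nonneg ham fun x hx => hg0 x ⟨hx.1, hx.2.trans hmb.le⟩
  · exact intervalIntegral_pos_of_pos_on (hint.mono_set hsub.2)
      (fun x hx => hc ⟨(le_max_right a c).trans_lt hx.1, hx.2.le⟩) hmb

noncomputable def radialWeight (N : ℕ) (b : ℝ → ℝ) (r : ℝ) : ℝ :=
  r ^ (N - 1) * Real.exp (-∫ t in (0:ℝ)..r, b t * t)

section radialWeight

variable {N : ℕ} {b : ℝ → ℝ}

theorem radialWeight_pos {r : ℝ} (hr : 0 < r) : 0 < radialWeight N b r := by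
  unfold radialWeight; positivity

theorem radialWeight_nonneg {r : ℝ} (hr : 0 ≤ r) : 0 ≤ radialWeight N b r := by
  unfold radialWeight; positivity

theorem continuousOn_radialWeight (hb : ContinuousOn b (Icc 0 1)) :
    ContinuousOn (radialWeight N b) (Icc 0 1) := by
  have hprim : ContinuousOn (fun r => ∫ t in (0:ℝ)..r, b t * t) (Icc 0 1) := by
    have hbt : ContinuousOn (fun t => b t * t) (uIcc 0 1) := by
      rw [uIcc_of_le zero_le_one]; exact hb.mul continuousOn_id
    simpa only [uIcc_of_le zero_le_one] using continuousOn_primitive_interval hbt.integrableOn_uIcc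
  exact (continuousOn_pow _).mul (hprim.neg.rexp)

theorem hasDerivAt_radialWeight (hN : 1 ≤ N) (hb : ContinuousOn b (Icc 0 1)) {r : ℝ}
    (hr : r ∈ Ioo (0:ℝ) 1) :
    HasDerivAt (radialWeight N b) (radialWeight N b r * ((N - 1) / r - b r * r)) r := by
  have hbt : ContinuousOn (fun t => b t * t) (Icc 0 1) := hb.mul continuousOn_id
  have hprim : HasDerivAt (fun r => ∫ t in (0:ℝ)..r, b t * t) (b r * r) r :=
    integral_hasDerivAt_right
      ((hbt.mono (by simp [uIcc_of_le hr.1.le, Icc_subset_Icc_right hr.2.le])).intervalIntegrable)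
      ((hbt.mono Ioo_subset_Icc_self).stronglyMeasurableAtFilter isOpen_Ioo r hr)
      (hbt.continuousAt (Icc_mem_nhds hr.1 hr.2))
  have hpow : HasDerivAt (fun x : ℝ => x ^ (N - 1)) (((N - 1 : ℕ) : ℝ) * r ^ (N - 1 - 1)) r :=
    hasDerivAt_pow _ r
  refine (hpow.mul hprim.neg.exp).congr_deriv ?_
  simp only [radialWeight, Pi.neg_apply]
  have hr0 : r ≠ 0 := hr.1.ne'
  rw [Nat.cast_sub hN]
  rcases Nat.lt_or_ge 1 N with h | h
  · rw [show N - 1 = N - 1 - 1 + 1 by omega, pow_succ]; field_simp; push_cast; ring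
  · obtain rfl : N = 1 := by omega
    simp

theorem integral_radialWeight_mul_sub_eq_zero (hN : 1 ≤ N) (hb : ContinuousOn b (Icc 0 1))
    {u u' u'' F : ℝ → ℝ} (hu : ∀ r ∈ Icc (0:ℝ) 1, HasDerivWithinAt u (u' r) (Icc 0 1) r)
    (hu' : ContinuousOn u' (Icc 0 1)) (hu'' : ∀ r ∈ Ioo (0:ℝ) 1, HasDerivAt u' (u'' r) r)
    (hu'0 : u' 0 = 0) (hu'1 : u' 1 = 0) (hF : ContinuousOn F (Icc 0 1))
    (hode : ∀ r ∈ Ioo (0:ℝ) 1, -u'' r + (b r * r - ((N : ℝ) - 1) / r) * u' r + u r = F r) :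
    ∫ r in (0:ℝ)..1, radialWeight N b r * (u r - F r) = 0 := by
  have hflux : ∀ r ∈ Ioo (0:ℝ) 1, HasDerivAt (fun r => radialWeight N b r * u' r)
      (radialWeight N b r * (u r - F r)) r := fun r hr =>
    ((hasDerivAt_radialWeight hN hb hr).mul (hu'' r hr)).congr_deriv (by rw [← hode r hr]; ring)
  have hu_cont : ContinuousOn u (Icc 0 1) := fun r hr => (hu r hr).continuousWithinAt
  have hint : ContinuousOn (fun r => radialWeight N b r * (u r - F r)) (uIcc 0 1) := by
    rw [uIcc_of_le zero_le_one]; exact (continuousOn_radialWeight hb).mul (hu_cont.sub hF)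
  rw [integral_eq_sub_of_hasDerivAt_of_le zero_le_one ((continuousOn_radialWeight hb).mul hu')
    hflux hint.intervalIntegrable]
  simp [hu'0, hu'1]

theorem apply_one_le_rhs_of_rhs_le (hN : 1 ≤ N) (hb : ContinuousOn b (Icc 0 1))
    {u u' u'' F : ℝ → ℝ} (hu : ∀ r ∈ Icc (0:ℝ) 1, HasDerivWithinAt u (u' r) (Icc 0 1) r)
    (hu' : ContinuousOn u' (Icc 0 1)) (hu'' : ∀ r ∈ Ioo (0:ℝ) 1, HasDerivAt u' (u'' r) r)
    (hu'0 : u' 0 = 0) (hu'1 : u' 1 = 0) (hF : ContinuousOn F (Icc 0 1))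
    (hode : ∀ r ∈ Ioo (0:ℝ) 1, -u'' r + (b r * r - ((N : ℝ) - 1) / r) * u' r + u r = F r)
    (hFu : ∀ r ∈ Icc (0:ℝ) 1, F r ≤ u r) : u 1 ≤ F 1 := by
  by_contra! h
  have hu_cont : ContinuousOn u (Icc 0 1) := fun r hr => (hu r hr).continuousWithinAt
  have hpos := intervalIntegral_pos_of_continuousOn_of_nonneg_of_pos_right
    (g := fun r => radialWeight N b r * (u r - F r)) zero_lt_one
    ((continuousOn_radialWeight hb).mul (hu_cont.sub hF))
    (fun r hr => mul_nonneg (radialWeight_nonneg hr.1) (sub_nonneg.2 (hFu r hr)))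
    (mul_pos (radialWeight_pos one_pos) (sub_pos.2 h))
  exact hpos.ne' (integral_radialWeight_mul_sub_eq_zero hN hb hu hu' hu'' hu'0 hu'1 hF hode)

end radialWeight

theorem sq_le_mul_integral_sq_add_sq_mul_pow {n : ℕ} (hn : 1 ≤ n) {u u' : ℝ → ℝ}
    (hu : ∀ r ∈ Icc (0:ℝ) 1, HasDerivWithinAt u (u' r) (Icc 0 1) r)
    (hu' : ContinuousOn u' (Icc 0 1)) :
    u 1 ^ 2 ≤ (n + 1) * ∫ r in (0:ℝ)..1, (u' r ^ 2 + u r ^ 2) * r ^ (n - 1) := by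
  have hu_cont : ContinuousOn u (Icc 0 1) := fun r hr => (hu r hr).continuousWithinAt
  have hderiv : ∀ r ∈ Ioo (0:ℝ) 1, HasDerivAt (fun r => r ^ n * u r ^ 2)
      (n * r ^ (n - 1) * u r ^ 2 + r ^ n * (2 * u r * u' r)) r := by
    intro r hr
    have hur : HasDerivAt u (u' r) r :=
      (hu r (Ioo_subset_Icc_self hr)).hasDerivAt (Icc_mem_nhds hr.1 hr.2)
    exact ((hasDerivAt_pow n r).fun_mul (hur.fun_pow 2)).congr_deriv (by norm_num)
  have hbound : ∀ r ∈ Ioo (0:ℝ) 1, n * r ^ (n - 1) * u r ^ 2 + r ^ n * (2 * u r * u' r)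
      ≤ (n + 1) * ((u' r ^ 2 + u r ^ 2) * r ^ (n - 1)) := by
    intro r hr
    have hpow : r ^ n = r * r ^ (n - 1) := by rw [← pow_succ']; congr 1; omega
    have hamgm : r * (2 * u r * u' r) ≤ u' r ^ 2 + u r ^ 2 := by
      nlinarith [two_mul_le_add_sq (u r) (u' r), sq_nonneg (u' r), sq_nonneg (u r), hr.1, hr.2]
    rw [hpow]
    nlinarith [mul_le_mul_of_nonneg_right hamgm (pow_nonneg hr.1.le (n - 1)),
      mul_nonneg (Nat.cast_nonneg n) (mul_nonneg (pow_nonneg hr.1.le (n - 1)) (sq_nonneg (u' r)))]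
  have hint : ContinuousOn (fun r => (u' r ^ 2 + u r ^ 2) * r ^ (n - 1)) (Icc 0 1) :=
    ((hu'.pow 2).add (hu_cont.pow 2)).mul (continuousOn_pow _)
  have := sub_le_integral_of_hasDeriv_right_of_le (g := fun r => r ^ n * u r ^ 2)
    (φ := fun r => (n + 1 : ℝ) * ((u' r ^ 2 + u r ^ 2) * r ^ (n - 1))) zero_le_one
    ((continuousOn_pow n).mul (hu_cont.pow 2)) (fun r hr => (hderiv r hr).hasDerivWithinAt)
    (continuousOn_const.mul hint).integrableOn_Icc hbound
  rw [intervalIntegral.integral_const_mul] at this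
  simpa [zero_pow (by omega : n ≠ 0)] using this

theorem stmt_10_general (N : ℕ) (hN : 2 ≤ N) (a b f : ℝ → ℝ)
    (ha_diff : ContDiffOn ℝ 1 a (Icc 0 1))
    (ha_mono : MonotoneOn a (Icc 0 1))
    (ha0 : 0 < a 0)
    (hb_cont : ContinuousOn b (Icc 0 1))
    (hf_diff : ContDiffOn ℝ 1 f (Ici 0))
    (hf_mono : MonotoneOn f (Ici 0))
    (hf0 : f 0 = 0)
    (hf'0 : derivWithin f (Ici 0) 0 = 0) :
    ∃ k₂ > (0:ℝ), ∀ μ ∈ Ioo (0:ℝ) 1, ∀ u u' u'' : ℝ → ℝ,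
      (∀ r ∈ Icc (0:ℝ) 1, 0 ≤ u r) →
      MonotoneOn u (Icc 0 1) →
      (∃ r ∈ Icc (0:ℝ) 1, u r ≠ 0) →
      (∀ r ∈ Icc (0:ℝ) 1, HasDerivWithinAt u (u' r) (Icc 0 1) r) →
      ContinuousOn u' (Icc 0 1) →
      (∀ r ∈ Ioo (0:ℝ) 1, HasDerivAt u' (u'' r) r) →
      u' 0 = 0 → u' 1 = 0 →
      (∀ r ∈ Ioo (0:ℝ) 1,
        -u'' r + (b r * r - ((N : ℝ) - 1) / r) * u' r + u r = μ * (a r * f (u r))) →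
      k₂ ^ 2 ≤ ∫ r in (0:ℝ)..1, (u' r ^ 2 + u r ^ 2) * r ^ (N - 1) := by
  have h1 : (1:ℝ) ∈ Icc (0:ℝ) 1 := right_mem_Icc.2 zero_le_one
  have ha_pos : ∀ r ∈ Icc (0:ℝ) 1, 0 < a r := fun r hr =>
    ha0.trans_le (ha_mono (left_mem_Icc.2 zero_le_one) hr hr.1)
  have hf_deriv : HasDerivWithinAt f 0 (Ici 0) 0 := by
    simpa only [hf'0] using (hf_diff.differentiableOn one_ne_zero 0 self_mem_Ici).hasDerivWithinAt
  obtain ⟨δ, hδ, hfδ⟩ := exists_le_mul_of_hasDerivWithinAt_zero hf0 hf_deriv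
    (one_div_pos.2 (mul_pos two_pos (ha_pos 1 h1)))
  refine ⟨δ / (N + 1), by positivity, ?_⟩
  rintro μ hμ u u' u'' hu0 hu_mono ⟨r₁, hr₁, hur₁⟩ hu hu' hu'' hu'0 hu'1 hode
  have hu_cont : ContinuousOn u (Icc 0 1) := fun r hr => (hu r hr).continuousWithinAt
  have hu1 : 0 < u 1 := ((hu0 r₁ hr₁).lt_of_ne' hur₁).trans_le (hu_mono hr₁ h1 hr₁.2)
  have hδu : δ < u 1 := by
    by_contra! hle
    set F : ℝ → ℝ := fun r => μ * (a r * f (u r))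
    have hF_le : ∀ r ∈ Icc (0:ℝ) 1, F r ≤ u r / 2 := by
      intro r hr
      have hur : u r ∈ Icc 0 δ := ⟨hu0 r hr, (hu_mono hr h1 hr.2).trans hle⟩
      have hfu : 0 ≤ f (u r) := hf0 ▸ hf_mono self_mem_Ici hur.1 hur.1
      have ha1 := ha_pos 1 h1
      calc F r ≤ a r * f (u r) := mul_le_of_le_one_left (by positivity [ha_pos r hr]) hμ.2.le
        _ ≤ a 1 * (1 / (2 * a 1) * u r) :=
          mul_le_mul (ha_mono hr h1 hr.2) (hfδ _ hur) hfu ha1.le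
        _ = u r / 2 := by field_simp
    have hF_cont : ContinuousOn F (Icc 0 1) := continuousOn_const.mul
      (ha_diff.continuousOn.mul (hf_diff.continuousOn.comp hu_cont fun r hr => hu0 r hr))
    have h1F := apply_one_le_rhs_of_rhs_le (by omega) hb_cont hu hu' hu'' hu'0 hu'1 hF_cont hode
      fun r hr => (hF_le r hr).trans (by linarith [hu0 r hr])
    linarith [hF_le 1 h1]
  calc (δ / (N + 1)) ^ 2 ≤ u 1 ^ 2 / (N + 1) := by
        rw [div_pow]
        gcongr
        exact le_self_pow₀ (by simp) two_ne_zero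
    _ ≤ _ := by
        rw [div_le_iff₀ (by positivity)]
        linarith [sq_le_mul_integral_sq_add_sq_mul_pow (n := N) (by omega) hu hu']

/-- Uniform lower `H¹` bound for nontrivial nonnegative nondecreasing radial
solutions of `-Δu + b(|x|) x·∇u + u = μ a(|x|) f(u)` with `μ ∈ (0,1)`. -/
theorem stmt_10 (N : ℕ) (hN : 2 ≤ N) (a b f : ℝ → ℝ)
    (ha_diff : ContDiffOn ℝ 1 a (Icc 0 1))
    (ha_mono : MonotoneOn a (Icc 0 1))
    (ha0 : 0 < a 0)
    (hb_cont : ContinuousOn b (Icc 0 1))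
    (hb_nonpos : ∀ r ∈ Icc (0:ℝ) 1, b r ≤ 0)
    (hrb_diff : ∀ r ∈ Ioo (0:ℝ) 1, DifferentiableAt ℝ (fun t => b t * t) r)
    (hrb : ∀ r ∈ Ioo (0:ℝ) 1,
      -1 - ((N : ℝ) - 1) / r ^ 2 < deriv (fun t => b t * t) r)
    (hf_diff : ContDiffOn ℝ 1 f (Ici 0))
    (hf_mono : MonotoneOn f (Ici 0))
    (hf0 : f 0 = 0)
    (hf'0 : derivWithin f (Ici 0) 0 = 0) :
    ∃ k₂ > (0:ℝ), ∀ μ ∈ Ioo (0:ℝ) 1, ∀ u u' u'' : ℝ → ℝ,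
      (∀ r ∈ Icc (0:ℝ) 1, 0 ≤ u r) →
      MonotoneOn u (Icc 0 1) →
      (∃ r ∈ Icc (0:ℝ) 1, u r ≠ 0) →
      (∀ r ∈ Icc (0:ℝ) 1, HasDerivWithinAt u (u' r) (Icc 0 1) r) →
      ContinuousOn u' (Icc 0 1) →
      (∀ r ∈ Ioo (0:ℝ) 1, HasDerivAt u' (u'' r) r) →
      u' 0 = 0 → u' 1 = 0 →
      (∀ r ∈ Ioo (0:ℝ) 1,
        -u'' r + (b r * r - ((N : ℝ) - 1) / r) * u' r + u r = μ * (a r * f (u r))) →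
      k₂ ^ 2 ≤ ∫ r in (0:ℝ)..1, (u' r ^ 2 + u r ^ 2) * r ^ (N - 1) :=
  stmt_10_general N hN a b f ha_diff ha_mono ha0 hb_cont hf_diff hf_mono hf0 hf'0
end

section
/- Let N ≥ 2 and let f : [0,∞) → ℝ be continuously differentiable. Let λ₂ > 0 be a constant such that for every continuously differentiable v : [0,1] → ℝ with ∫₀¹ v(r) r^{N−1} dr = 0 one has λ₂ · ∫₀¹ v(r)² r^{N−1} dr ≤ ∫₀¹ (v'(r)² + v(r)²) r^{N−1} dr. Let u : [0,1] → ℝ be nonnegative, continuously differentiable on [0,1], twice differentiable on (0,1), with u'(0) = u'(1) = 0 and −u''(r) − ((N−1)/r)·u'(r) + u(r) = f(u(r)) for all r ∈ (0,1). If f'(s) < λ₂ for every s ∈ [0, sup_{[0,1]} u], then u is constant. -/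
/-!
Let `c` be the weighted mean of `u` for the radial measure `r^(N-1) dr` and `v = u - c`.
Testing the equation against `r^(N-1) v` and integrating by parts (the Neumann conditions kill
the boundary terms) gives
`∫ (u'² + v²) r^(N-1) = ∫ (f(u) - c) v r^(N-1) = ∫ (f(u) - f(c)) v r^(N-1)`,
the last step because `v` has mean zero. Since `c` lies in the range of `u`, the mean value
theorem bounds the right side by `μ ∫ v² r^(N-1)`, where `μ < λ₂` is the maximum of `f'` on
`[0, sup u]`. The Poincaré inequality then forces `(λ₂ - μ) ∫ v² r^(N-1) ≤ 0`, so `v ≡ 0`.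
-/

open Set MeasureTheory

theorem IsCompact.exists_lt_forall_le_of_forall_lt {α : Type*} [TopologicalSpace α] {s : Set α}
    (hs : IsCompact s) {g : α → ℝ} (hg : ContinuousOn g s) {L : ℝ}
    (hlt : ∀ x ∈ s, g x < L) :
    ∃ μ < L, ∀ x ∈ s, g x ≤ μ := by
  rcases s.eq_empty_or_nonempty with rfl | hne
  · exact ⟨L - 1, by linarith, by simp⟩
  · obtain ⟨x₀, hx₀, hmax⟩ := hs.exists_isMaxOn hne hg
    exact ⟨g x₀, hlt x₀ hx₀, hmax⟩

theorem Convex.sub_mul_sub_le_mul_sq_of_deriv_le {D : Set ℝ} (hD : Convex ℝ D) {f : ℝ → ℝ}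
    (hf : ContinuousOn f D) (hf' : DifferentiableOn ℝ f (interior D)) {C : ℝ}
    (le_hf' : ∀ x ∈ interior D, deriv f x ≤ C) {x y : ℝ} (hx : x ∈ D) (hy : y ∈ D) :
    (f x - f y) * (x - y) ≤ C * (x - y) ^ 2 := by
  rcases le_total y x with hyx | hxy
  · have := hD.image_sub_le_mul_sub_of_deriv_le hf hf' le_hf' y hy x hx hyx
    nlinarith [sub_nonneg.2 hyx]
  · have := hD.image_sub_le_mul_sub_of_deriv_le hf hf' le_hf' x hx y hy hxy
    nlinarith [sub_nonneg.2 hxy]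

theorem ContDiffOn.exists_lt_forall_sub_mul_sub_le_mul_sq {f : ℝ → ℝ}
    (hf : ContDiffOn ℝ 1 f (Ici 0)) {M L : ℝ}
    (hlt : ∀ s ∈ Icc 0 M, derivWithin f (Ici 0) s < L) :
    ∃ μ < L, ∀ x ∈ Icc 0 M, ∀ y ∈ Icc 0 M, (f x - f y) * (x - y) ≤ μ * (x - y) ^ 2 := by
  obtain ⟨μ, hμ, hle⟩ := isCompact_Icc.exists_lt_forall_le_of_forall_lt
    ((hf.continuousOn_derivWithin (uniqueDiffOn_Ici 0) le_rfl).mono Icc_subset_Ici_self) hlt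
  refine ⟨μ, hμ, fun x hx y hy => (convex_Icc 0 M).sub_mul_sub_le_mul_sq_of_deriv_le
    (hf.continuousOn.mono Icc_subset_Ici_self) ?_ ?_ hx hy⟩ <;> rw [interior_Icc]
  · exact (hf.differentiableOn one_ne_zero).mono (Ioo_subset_Icc_self.trans Icc_subset_Ici_self)
  · intro s hs
    rw [← derivWithin_of_mem_nhds (Ici_mem_nhds hs.1)]
    exact hle s (Ioo_subset_Icc_self hs)

/-- The mean over the unit ball of `ℝ^(k+1)` of the radial function `u`, in polar coordinates. -/
noncomputable def radialMean (k : ℕ) (u : ℝ → ℝ) : ℝ :=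
  (k + 1) * ∫ r in (0:ℝ)..1, u r * r ^ k

section radialMean

variable {k : ℕ} {u : ℝ → ℝ}

theorem integral_pow_zero_one (k : ℕ) : ∫ r in (0:ℝ)..1, r ^ k = 1 / (k + 1) := by
  simp [integral_pow]

theorem integral_sub_radialMean_mul_pow
    (hu : IntervalIntegrable (fun r => u r * r ^ k) volume 0 1) :
    ∫ r in (0:ℝ)..1, (u r - radialMean k u) * r ^ k = 0 := by
  simp_rw [sub_mul]
  rw [intervalIntegral.integral_sub hu ((continuous_pow k).intervalIntegrable 0 1 |>.const_mul _),
    intervalIntegral.integral_const_mul, integral_pow_zero_one, radialMean]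
  field_simp
  ring

theorem radialMean_mem_Icc (hu : IntervalIntegrable (fun r => u r * r ^ k) volume 0 1)
    {a b : ℝ} (hab : ∀ r ∈ Icc (0:ℝ) 1, u r ∈ Icc a b) : radialMean k u ∈ Icc a b := by
  have hw : IntervalIntegrable (fun r : ℝ => r ^ k) volume 0 1 :=
    (continuous_pow k).intervalIntegrable 0 1
  have hk : (0:ℝ) < k + 1 := by positivity
  have lower : a / (k + 1) ≤ ∫ r in (0:ℝ)..1, u r * r ^ k := by
    rw [div_eq_mul_one_div, ← integral_pow_zero_one, ← intervalIntegral.integral_const_mul]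
    exact intervalIntegral.integral_mono_on zero_le_one (hw.const_mul a) hu
      fun r hr => mul_le_mul_of_nonneg_right (hab r hr).1 (pow_nonneg hr.1 k)
  have upper : ∫ r in (0:ℝ)..1, u r * r ^ k ≤ b / (k + 1) := by
    rw [div_eq_mul_one_div, ← integral_pow_zero_one, ← intervalIntegral.integral_const_mul]
    exact intervalIntegral.integral_mono_on zero_le_one hu (hw.const_mul b)
      fun r hr => mul_le_mul_of_nonneg_right (hab r hr).2 (pow_nonneg hr.1 k)
  rw [radialMean]
  constructor
  · rwa [div_le_iff₀' hk] at lower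
  · rwa [le_div_iff₀' hk] at upper

end radialMean

theorem eqOn_zero_of_integral_sq_mul_pow_eq_zero {k : ℕ} {v : ℝ → ℝ}
    (hv : ContinuousOn v (Icc 0 1)) (h : ∫ r in (0:ℝ)..1, v r ^ 2 * r ^ k = 0) :
    EqOn v 0 (Icc 0 1) := by
  have hg : ContinuousOn (fun r => v r ^ 2 * r ^ k) (Icc 0 1) :=
    (hv.pow 2).mul (continuous_pow k).continuousOn
  have hae : (fun r => v r ^ 2 * r ^ k) =ᵐ[volume.restrict (Icc 0 1)] 0 := by
    rw [← Measure.restrict_congr_set Ioc_ae_eq_Icc]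
    refine (intervalIntegral.integral_eq_zero_iff_of_le_of_nonneg_ae zero_le_one ?_
      (hg.intervalIntegrable_of_Icc zero_le_one)).1 h
    filter_upwards [ae_restrict_mem measurableSet_Ioc] with r hr
    exact mul_nonneg (sq_nonneg _) (pow_nonneg hr.1.le k)
  have hzero := Measure.eqOn_Icc_of_ae_eq volume zero_ne_one hae hg continuousOn_const
  have hIoc : EqOn v 0 (Ioc 0 1) := fun r hr => by
    simpa [hr.1.ne'] using hzero (Ioc_subset_Icc_self hr)
  refine hIoc.of_subset_closure hv continuousOn_const Ioc_subset_Icc_self ?_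
  rw [closure_Ioc zero_ne_one]

theorem integral_deriv_sq_add_sq_mul_pow_eq {k : ℕ} {u u' u'' g : ℝ → ℝ} (c : ℝ)
    (hu : ∀ r ∈ Icc (0:ℝ) 1, HasDerivWithinAt u (u' r) (Icc 0 1) r)
    (hu'_cont : ContinuousOn u' (Icc 0 1))
    (hu' : ∀ r ∈ Ioo (0:ℝ) 1, HasDerivAt u' (u'' r) r)
    (hu'0 : u' 0 = 0) (hu'1 : u' 1 = 0) (hg : ContinuousOn g (Icc 0 1))
    (heq : ∀ r ∈ Ioo (0:ℝ) 1, -u'' r - k / r * u' r + u r = g r) :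
    ∫ r in (0:ℝ)..1, (u' r ^ 2 + (u r - c) ^ 2) * r ^ k =
      ∫ r in (0:ℝ)..1, (g r - c) * (u r - c) * r ^ k := by
  have hu_cont : ContinuousOn u (Icc 0 1) := fun r hr => (hu r hr).continuousWithinAt
  have hw : ContinuousOn (fun r : ℝ => r ^ k) (Icc 0 1) := (continuous_pow k).continuousOn
  set G := fun r => (u' r ^ 2 + (u r - g r) * (u r - c)) * r ^ k
  have hG_deriv : ∀ r ∈ Ioo (0:ℝ) 1,
      HasDerivAt (fun r => r ^ k * u' r * (u r - c)) (G r) r := by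
    intro r hr
    have hu_r := ((hu r (Ioo_subset_Icc_self hr)).hasDerivAt (Icc_mem_nhds hr.1 hr.2)).sub_const c
    refine (((hasDerivAt_pow k r).mul (hu' r hr)).mul hu_r).congr_deriv ?_
    have hpow : (k : ℝ) * r ^ (k - 1) = k / r * r ^ k := by
      rcases k with _ | k
      · simp
      · rw [Nat.add_sub_cancel, pow_succ]
        field_simp [hr.1.ne']
    simp only [G, Pi.mul_apply, hpow, ← heq r hr]
    ring
  have hv_cont : ContinuousOn (fun r => u r - c) (Icc 0 1) := hu_cont.sub continuousOn_const
  have hG_int : IntervalIntegrable G volume 0 1 :=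
    (((hu'_cont.pow 2).add ((hu_cont.sub hg).mul hv_cont)).mul hw).intervalIntegrable_of_Icc
      zero_le_one
  have hG_zero : ∫ r in (0:ℝ)..1, G r = 0 := by
    rw [intervalIntegral.integral_eq_sub_of_hasDerivAt_of_le zero_le_one
      ((hw.mul hu'_cont).mul hv_cont) hG_deriv hG_int]
    simp [hu'0, hu'1]
  have hsplit : (fun r => (u' r ^ 2 + (u r - c) ^ 2) * r ^ k) =
      fun r => G r + (g r - c) * (u r - c) * r ^ k := by
    ext r
    simp only [G]
    ring
  have hR_int : IntervalIntegrable (fun r => (g r - c) * (u r - c) * r ^ k) volume 0 1 :=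
    (((hg.sub continuousOn_const).mul hv_cont).mul hw).intervalIntegrable_of_Icc zero_le_one
  rw [hsplit, intervalIntegral.integral_add hG_int hR_int, hG_zero, zero_add]

theorem integral_sub_mul_sub_mul_pow_le {k : ℕ} {f u : ℝ → ℝ} {S : Set ℝ} {c μ : ℝ}
    (hf : ∀ x ∈ S, ∀ y ∈ S, (f x - f y) * (x - y) ≤ μ * (x - y) ^ 2)
    (hu : ContinuousOn u (Icc 0 1)) (hfu : ContinuousOn (fun r => f (u r)) (Icc 0 1))
    (hu_mem : ∀ r ∈ Icc (0:ℝ) 1, u r ∈ S) (hc : c ∈ S)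
    (hmean : ∫ r in (0:ℝ)..1, (u r - c) * r ^ k = 0) :
    ∫ r in (0:ℝ)..1, (f (u r) - c) * (u r - c) * r ^ k ≤
      μ * ∫ r in (0:ℝ)..1, (u r - c) ^ 2 * r ^ k := by
  have hw : ContinuousOn (fun r : ℝ => r ^ k) (Icc 0 1) := (continuous_pow k).continuousOn
  have hv : ContinuousOn (fun r => u r - c) (Icc 0 1) := hu.sub continuousOn_const
  have hsplit : (fun r => (f (u r) - c) * (u r - c) * r ^ k) =
      fun r => (f (u r) - f c) * (u r - c) * r ^ k + (f c - c) * ((u r - c) * r ^ k) := by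
    ext r
    ring
  have hP_int : IntervalIntegrable (fun r => (f (u r) - f c) * (u r - c) * r ^ k) volume 0 1 :=
    (((hfu.sub continuousOn_const).mul hv).mul hw).intervalIntegrable_of_Icc zero_le_one
  have hv_int : IntervalIntegrable (fun r => (u r - c) * r ^ k) volume 0 1 :=
    (hv.mul hw).intervalIntegrable_of_Icc zero_le_one
  rw [hsplit, intervalIntegral.integral_add hP_int (hv_int.const_mul _),
    intervalIntegral.integral_const_mul, hmean, mul_zero, add_zero,
    ← intervalIntegral.integral_const_mul]
  refine intervalIntegral.integral_mono_on zero_le_one hP_int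
    ((((hv.pow 2).mul hw).intervalIntegrable_of_Icc zero_le_one).const_mul μ) fun r hr => ?_
  rw [← mul_assoc]
  exact mul_le_mul_of_nonneg_right (hf _ (hu_mem r hr) c hc) (pow_nonneg hr.1 k)

theorem stmt_11_general (N : ℕ) (hN : 2 ≤ N) (f : ℝ → ℝ)
    (hf_diff : ContDiffOn ℝ 1 f (Ici 0))
    (lam2 : ℝ)
    (hpoincare : ∀ v v' : ℝ → ℝ,
      (∀ r ∈ Icc (0:ℝ) 1, HasDerivWithinAt v (v' r) (Icc 0 1) r) →
      ContinuousOn v' (Icc 0 1) →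
      (∫ r in (0:ℝ)..1, v r * r ^ (N - 1)) = 0 →
      lam2 * ∫ r in (0:ℝ)..1, v r ^ 2 * r ^ (N - 1) ≤
        ∫ r in (0:ℝ)..1, (v' r ^ 2 + v r ^ 2) * r ^ (N - 1))
    (u u' u'' : ℝ → ℝ)
    (hu_nonneg : ∀ r ∈ Icc (0:ℝ) 1, 0 ≤ u r)
    (hu : ∀ r ∈ Icc (0:ℝ) 1, HasDerivWithinAt u (u' r) (Icc 0 1) r)
    (hu'_cont : ContinuousOn u' (Icc 0 1))
    (hu' : ∀ r ∈ Ioo (0:ℝ) 1, HasDerivAt u' (u'' r) r)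
    (hu'0 : u' 0 = 0) (hu'1 : u' 1 = 0)
    (heq : ∀ r ∈ Ioo (0:ℝ) 1,
      -u'' r - ((N : ℝ) - 1) / r * u' r + u r = f (u r))
    (hf' : ∀ s ∈ Icc (0:ℝ) (sSup (u '' Icc (0:ℝ) 1)),
      derivWithin f (Ici 0) s < lam2) :
    ∀ r ∈ Icc (0:ℝ) 1, ∀ s ∈ Icc (0:ℝ) 1, u r = u s := by
  set k := N - 1
  have hk : (N : ℝ) - 1 = k := by rw [Nat.cast_sub (by omega), Nat.cast_one]
  have hu_cont : ContinuousOn u (Icc 0 1) := fun r hr => (hu r hr).continuousWithinAt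
  have hfu_cont : ContinuousOn (fun r => f (u r)) (Icc 0 1) :=
    hf_diff.continuousOn.comp hu_cont hu_nonneg
  set M := sSup (u '' Icc (0:ℝ) 1)
  have hu_mem : ∀ r ∈ Icc (0:ℝ) 1, u r ∈ Icc 0 M := fun r hr =>
    ⟨hu_nonneg r hr, le_csSup (isCompact_Icc.image_of_continuousOn hu_cont).bddAbove
      (mem_image_of_mem u hr)⟩
  obtain ⟨μ, hμ, hf_mono⟩ := hf_diff.exists_lt_forall_sub_mul_sub_le_mul_sq hf'
  set c := radialMean k u
  have hint : IntervalIntegrable (fun r => u r * r ^ k) volume 0 1 :=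
    (hu_cont.mul (continuous_pow k).continuousOn).intervalIntegrable_of_Icc zero_le_one
  have hmean := integral_sub_radialMean_mul_pow hint
  have henergy := integral_deriv_sq_add_sq_mul_pow_eq c hu hu'_cont hu' hu'0 hu'1 hfu_cont
    (by simpa only [hk] using heq)
  have hbound := integral_sub_mul_sub_mul_pow_le hf_mono hu_cont hfu_cont hu_mem
    (radialMean_mem_Icc hint hu_mem) hmean
  have hpoin := hpoincare (fun r => u r - c) u' (fun r hr => (hu r hr).sub_const c) hu'_cont hmean
  have hI_nonneg : 0 ≤ ∫ r in (0:ℝ)..1, (u r - c) ^ 2 * r ^ k :=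
    intervalIntegral.integral_nonneg zero_le_one fun r hr =>
      mul_nonneg (sq_nonneg _) (pow_nonneg hr.1 k)
  have hI : ∫ r in (0:ℝ)..1, (u r - c) ^ 2 * r ^ k = 0 := by nlinarith
  have hv := eqOn_zero_of_integral_sq_mul_pow_eq_zero (hu_cont.sub continuousOn_const) hI
  exact fun r hr s hs => (sub_eq_zero.1 (hv hr)).trans (sub_eq_zero.1 (hv hs)).symm

/-- If `f'` stays strictly below the second radial Neumann eigenvalue `λ₂`
(characterized by the Poincaré inequality for mean-zero radial functions) along the
range of `u`, then every nonnegative radial solution of `-Δu + u = f(u)` with Neumann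
boundary conditions is constant. -/
theorem stmt_11 (N : ℕ) (hN : 2 ≤ N) (f : ℝ → ℝ)
    (hf_diff : ContDiffOn ℝ 1 f (Ici 0))
    (lam2 : ℝ) (hlam2 : 0 < lam2)
    (hpoincare : ∀ v v' : ℝ → ℝ,
      (∀ r ∈ Icc (0:ℝ) 1, HasDerivWithinAt v (v' r) (Icc 0 1) r) →
      ContinuousOn v' (Icc 0 1) →
      (∫ r in (0:ℝ)..1, v r * r ^ (N - 1)) = 0 →
      lam2 * ∫ r in (0:ℝ)..1, v r ^ 2 * r ^ (N - 1) ≤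
        ∫ r in (0:ℝ)..1, (v' r ^ 2 + v r ^ 2) * r ^ (N - 1))
    (u u' u'' : ℝ → ℝ)
    (hu_nonneg : ∀ r ∈ Icc (0:ℝ) 1, 0 ≤ u r)
    (hu : ∀ r ∈ Icc (0:ℝ) 1, HasDerivWithinAt u (u' r) (Icc 0 1) r)
    (hu'_cont : ContinuousOn u' (Icc 0 1))
    (hu' : ∀ r ∈ Ioo (0:ℝ) 1, HasDerivAt u' (u'' r) r)
    (hu'0 : u' 0 = 0) (hu'1 : u' 1 = 0)
    (heq : ∀ r ∈ Ioo (0:ℝ) 1,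
      -u'' r - ((N : ℝ) - 1) / r * u' r + u r = f (u r))
    (hf' : ∀ s ∈ Icc (0:ℝ) (sSup (u '' Icc (0:ℝ) 1)),
      derivWithin f (Ici 0) s < lam2) :
    ∀ r ∈ Icc (0:ℝ) 1, ∀ s ∈ Icc (0:ℝ) 1, u r = u s :=
  stmt_11_general N hN f hf_diff lam2 hpoincare u u' u'' hu_nonneg hu hu'_cont hu' hu'0 hu'1 heq hf'
end

section
/- Let f : [0,∞) → ℝ be continuously differentiable and nondecreasing with f(0) = 0 and f'(0) = 0. Let M > 0, δ > 0 be such that f(s) ≥ (1+δ)·s for all s ≥ M, let s₀ > M and let p > 1. Then there exists a continuously differentiable nondecreasing function f̃ : [0,∞) → ℝ such that: (i) f̃(s) = f(s) for all s ∈ [0, s₀]; (ii) f̃(s) ≥ (1+δ)·s for all s ≥ M; and (iii) lim_{s→∞} f̃(s)/s^p = 1. -/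
/-!
Keep `f` on `[0, s₀]` and continue it by `f(s₀) + b h + A h^q + h^p`, `h = s - s₀`, with
`b = f'(s₀) ≥ 0` and `1 < q < p`. The two pieces agree to first order at `s₀`, every term of the
tail is nondecreasing, and `h^p` dominates at infinity. The lower bound asks for
`(1 + δ - b) h ≤ c + A h^q` with `c = f(s₀) - (1 + δ) s₀ ≥ 0`. If `b < 1 + δ` then `c > 0`, for
otherwise `f(s) - (1 + δ) s` would have a local minimum at `s₀` with negative derivative; and
for `c > 0` the intermediate power absorbs the linear deficit once `A` is large.
-/

open Set Filter Topology

theorem hasDerivWithinAt_union_of_isClosed {𝕜 F : Type*} [NontriviallyNormedField 𝕜]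
    [NormedAddCommGroup F] [NormedSpace 𝕜 F] {f f' : 𝕜 → F} {s t : Set 𝕜}
    (hs : IsClosed s) (ht : IsClosed t) (hfs : ∀ y ∈ s, HasDerivWithinAt f (f' y) s y)
    (hft : ∀ y ∈ t, HasDerivWithinAt f (f' y) t y) :
    ∀ x, HasDerivWithinAt f (f' x) (s ∪ t) x := by
  intro x
  have within (u : Set 𝕜) (hu : IsClosed u) (hfu : ∀ y ∈ u, HasDerivWithinAt f (f' y) u y) :
      HasDerivWithinAt f (f' x) u x := by
    by_cases hxu : x ∈ u
    · exact hfu x hxu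
    · exact HasFDerivWithinAt.of_notMem_closure (by rwa [hu.closure_eq])
  exact (within s hs hfs).union (within t ht hft)

section Gluing

variable {a b : ℝ} {f g : ℝ → ℝ}

theorem eqOn_Ici_if_le (h₀ : f b = g b) : EqOn (fun x => if x ≤ b then f x else g x) g (Ici b) :=
  fun x (hx : b ≤ x) => by
    rcases hx.eq_or_lt with rfl | hx
    · exact (if_pos le_rfl).trans h₀
    · exact if_neg hx.not_ge

theorem contDiffOn_Ici_if_le (hab : a ≤ b) (hf : ContDiffOn ℝ 1 f (Ici a))
    (hg : ContDiffOn ℝ 1 g (Ici b)) (h₀ : f b = g b)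
    (h₁ : derivWithin f (Ici a) b = derivWithin g (Ici b) b) :
    ContDiffOn ℝ 1 (fun x => if x ≤ b then f x else g x) (Ici a) := by
  set h := fun x => if x ≤ b then f x else g x
  set D := fun x => if x ≤ b then derivWithin f (Ici a) x else derivWithin g (Ici b) x
  have hsplit : Icc a b ∪ Ici b = Ici a := Icc_union_Ici_eq_Ici hab
  have h_left : EqOn h f (Icc a b) := fun x hx => if_pos hx.2
  have h_right : EqOn h g (Ici b) := eqOn_Ici_if_le h₀
  have D_left : EqOn D (derivWithin f (Ici a)) (Icc a b) := fun x hx => if_pos hx.2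
  have D_right : EqOn D (derivWithin g (Ici b)) (Ici b) := eqOn_Ici_if_le h₁
  have hD : ∀ x ∈ Ici a, HasDerivWithinAt h (D x) (Ici a) x := by
    rw [← hsplit]
    refine fun x _ => hasDerivWithinAt_union_of_isClosed isClosed_Icc isClosed_Ici
      (fun y hy => ?_) (fun y hy => ?_) x
    · rw [D_left hy]
      exact (((hf.differentiableOn one_ne_zero) y (Icc_subset_Ici_self hy)).hasDerivWithinAt.mono
        Icc_subset_Ici_self).congr h_left (h_left hy)
    · rw [D_right hy]
      exact ((hg.differentiableOn one_ne_zero) y hy).hasDerivWithinAt.congr h_right (h_right hy)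
  have hD_cont : ContinuousOn D (Ici a) := by
    rw [← hsplit]
    exact ((hf.continuousOn_derivWithin (uniqueDiffOn_Ici a) le_rfl).mono
      Icc_subset_Ici_self |>.congr D_left).union_of_isClosed
      ((hg.continuousOn_derivWithin (uniqueDiffOn_Ici b) le_rfl).congr D_right)
      isClosed_Icc isClosed_Ici
  rw [contDiffOn_one_iff_derivWithin (uniqueDiffOn_Ici a)]
  exact ⟨fun x hx => (hD x hx).differentiableWithinAt,
    hD_cont.congr fun x hx => (hD x hx).derivWithin (uniqueDiffOn_Ici a x hx)⟩

theorem monotoneOn_Ici_if_le (hab : a ≤ b) (hf : MonotoneOn f (Icc a b))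
    (hg : MonotoneOn g (Ici b)) (h₀ : f b = g b) :
    MonotoneOn (fun x => if x ≤ b then f x else g x) (Ici a) := by
  rw [← Icc_union_Ici_eq_Ici hab]
  exact (hf.congr fun x hx => (if_pos hx.2).symm).union_right
    (hg.congr (eqOn_Ici_if_le h₀).symm) (isGreatest_Icc hab) isLeast_Ici

end Gluing

theorem HasDerivAt.eq_of_isLocalMin_sub_mul {f : ℝ → ℝ} {b k x₀ : ℝ} (hf : HasDerivAt f b x₀)
    (hmin : IsLocalMin (fun x => f x - k * x) x₀) : b = k := by
  have := hmin.hasDerivAt_eq_zero (hf.fun_sub ((hasDerivAt_id' x₀).const_mul k))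
  linarith

theorem exists_mul_le_add_mul_rpow {c ε q : ℝ} (hc : 0 < c) (hε : 0 ≤ ε) (hq : 1 ≤ q) :
    ∃ A, 0 ≤ A ∧ ∀ h, 0 ≤ h → ε * h ≤ c + A * h ^ q := by
  refine ⟨c * (ε / c) ^ q, by positivity, fun h hh => ?_⟩
  rcases le_or_gt (ε * h) c with hsmall | hbig
  · have : 0 ≤ c * (ε / c) ^ q * h ^ q := by positivity
    linarith
  · have hx : 1 ≤ ε * h / c := (one_le_div hc).2 hbig.le
    calc ε * h = c * (ε * h / c) ^ (1 : ℝ) := by rw [Real.rpow_one]; field_simp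
      _ ≤ c * (ε * h / c) ^ q := by gcongr
      _ = c * (ε / c) ^ q * h ^ q := by
        rw [mul_assoc, ← Real.mul_rpow (by positivity) hh, div_mul_eq_mul_div]
      _ ≤ c + c * (ε / c) ^ q * h ^ q := by linarith

theorem tendsto_rpow_div_rpow_atTop {r p : ℝ} (hrp : r < p) :
    Tendsto (fun y : ℝ => y ^ r / y ^ p) atTop (𝓝 0) := by
  refine (tendsto_rpow_neg_atTop (sub_pos.2 hrp)).congr' ?_
  filter_upwards [eventually_gt_atTop 0] with y hy
  rw [neg_sub, Real.rpow_sub hy]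

theorem tendsto_sub_rpow_div_rpow_atTop (x₀ p : ℝ) :
    Tendsto (fun x : ℝ => (x - x₀) ^ p / x ^ p) atTop (𝓝 1) := by
  have hratio : Tendsto (fun x : ℝ => 1 - x₀ * x⁻¹) atTop (𝓝 1) := by
    simpa using tendsto_const_nhds.sub (tendsto_inv_atTop_zero.const_mul x₀)
  have := ((Real.continuousAt_rpow_const 1 p (Or.inl one_ne_zero)).tendsto.comp hratio)
  rw [Real.one_rpow] at this
  refine this.congr' ?_
  filter_upwards [eventually_gt_atTop (max 0 x₀)] with x hx
  have hx0 : 0 < x := (le_max_left _ _).trans_lt hx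
  have hxx₀ : x₀ < x := (le_max_right _ _).trans_lt hx
  rw [Function.comp_apply, ← Real.div_rpow (by linarith) hx0.le]
  congr 1
  field_simp

noncomputable def powerTail (x₀ y₀ b A q p x : ℝ) : ℝ :=
  y₀ + b * (x - x₀) + A * (x - x₀) ^ q + (x - x₀) ^ p

namespace powerTail

variable {x₀ y₀ b A q p : ℝ}

theorem apply_self (hq : q ≠ 0) (hp : p ≠ 0) : powerTail x₀ y₀ b A q p x₀ = y₀ := by
  simp [powerTail, Real.zero_rpow hq, Real.zero_rpow hp]

theorem contDiff (hq : 1 ≤ q) (hp : 1 ≤ p) : ContDiff ℝ 1 (powerTail x₀ y₀ b A q p) := by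
  have hpow {r : ℝ} (hr : 1 ≤ r) : ContDiff ℝ 1 fun x : ℝ => (x - x₀) ^ r :=
    (Real.contDiff_rpow_const_of_le (n := 1) (by exact_mod_cast hr)).comp
      (contDiff_id.sub contDiff_const)
  unfold powerTail
  fun_prop

theorem hasDerivAt_self (hq : 1 < q) (hp : 1 < p) : HasDerivAt (powerTail x₀ y₀ b A q p) b x₀ := by
  have hpow {r : ℝ} (hr : 1 < r) : HasDerivAt (fun x : ℝ => (x - x₀) ^ r) 0 x₀ := by
    have := (Real.hasDerivAt_rpow_const (x := x₀ - x₀) (Or.inr hr.le)).comp_sub_const x₀ x₀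
    simpa [Real.zero_rpow (sub_ne_zero.2 hr.ne')] using this
  unfold powerTail
  simpa using (((hasDerivAt_const x₀ y₀).fun_add
    (((hasDerivAt_id' x₀).sub_const x₀).const_mul b)).fun_add ((hpow hq).const_mul A)).fun_add
    (hpow hp)

theorem monotoneOn (hb : 0 ≤ b) (hA : 0 ≤ A) (hq : 0 ≤ q) (hp : 0 ≤ p) :
    MonotoneOn (powerTail x₀ y₀ b A q p) (Ici x₀) := by
  intro x (hx : x₀ ≤ x) y (hy : x₀ ≤ y) hxy
  have hsub : x - x₀ ≤ y - x₀ := by linarith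
  have hq' : (x - x₀) ^ q ≤ (y - x₀) ^ q := Real.rpow_le_rpow (by linarith) hsub hq
  have hp' : (x - x₀) ^ p ≤ (y - x₀) ^ p := Real.rpow_le_rpow (by linarith) hsub hp
  unfold powerTail
  gcongr

theorem tendsto_div_rpow (hqp : q < p) (hp : 1 < p) :
    Tendsto (fun x => powerTail x₀ y₀ b A q p x / x ^ p) atTop (𝓝 1) := by
  have hlower : Tendsto (fun y : ℝ => y₀ * (y ^ (0 : ℝ) / y ^ p) + b * (y ^ (1 : ℝ) / y ^ p)
      + A * (y ^ q / y ^ p) + 1) atTop (𝓝 (y₀ * 0 + b * 0 + A * 0 + 1)) :=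
    (((tendsto_rpow_div_rpow_atTop (by linarith)).const_mul y₀).add
      ((tendsto_rpow_div_rpow_atTop hp).const_mul b) |>.add
      ((tendsto_rpow_div_rpow_atTop hqp).const_mul A)).add_const 1
  have hshift := (hlower.comp (tendsto_atTop_add_const_right _ (-x₀) tendsto_id)).mul
    (tendsto_sub_rpow_div_rpow_atTop x₀ p)
  simp only [mul_zero, zero_add, one_mul] at hshift
  refine hshift.congr' ?_
  filter_upwards [eventually_gt_atTop (max 0 x₀)] with x hx
  have hx0 : 0 < x := (le_max_left _ _).trans_lt hx
  have hxx₀ : 0 < x - x₀ := sub_pos.2 ((le_max_right _ _).trans_lt hx)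
  have : 0 < (x - x₀) ^ p := Real.rpow_pos_of_pos hxx₀ p
  have : 0 < x ^ p := Real.rpow_pos_of_pos hx0 p
  simp only [Function.comp_apply, id, ← sub_eq_add_neg, Real.rpow_zero, Real.rpow_one, powerTail]
  field_simp

end powerTail

theorem HasDerivAt.exists_mul_le_powerTail {f : ℝ → ℝ} {b k M x₀ q p : ℝ}
    (hf : HasDerivAt f b x₀) (hfM : ∀ x, M ≤ x → k * x ≤ f x) (hM : M < x₀) (hq : 1 ≤ q) :
    ∃ A, 0 ≤ A ∧ ∀ x, x₀ ≤ x → k * x ≤ powerTail x₀ (f x₀) b A q p x := by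
  have hfx₀ := hfM x₀ hM.le
  obtain ⟨A, hA_nonneg, hA⟩ : ∃ A, 0 ≤ A ∧
      ∀ h, 0 ≤ h → (k - b) * h ≤ f x₀ - k * x₀ + A * h ^ q := by
    rcases le_or_gt k b with hb_big | hb_small
    · exact ⟨0, le_rfl, fun h hh => by nlinarith⟩
    refine exists_mul_le_add_mul_rpow (lt_of_le_of_ne (by linarith) fun hc => hb_small.ne
      (hf.eq_of_isLocalMin_sub_mul ?_)) (by linarith) hq
    filter_upwards [Ici_mem_nhds hM] with x hx
    linarith [hfM x hx]
  refine ⟨A, hA_nonneg, fun x hx => ?_⟩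
  have := hA (x - x₀) (by linarith)
  have := Real.rpow_nonneg (by linarith : 0 ≤ x - x₀) p
  simp only [powerTail]
  linarith

theorem stmt_12_general (f : ℝ → ℝ)
    (hf_diff : ContDiffOn ℝ 1 f (Ici 0))
    (hf_mono : MonotoneOn f (Ici 0))
    (M δ : ℝ) (hM : 0 < M)
    (hfM : ∀ s : ℝ, M ≤ s → (1 + δ) * s ≤ f s)
    (s0 : ℝ) (hs0 : M < s0) (p : ℝ) (hp : 1 < p) :
    ∃ ftil : ℝ → ℝ,
      ContDiffOn ℝ 1 ftil (Ici 0) ∧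
      MonotoneOn ftil (Ici 0) ∧
      (∀ s ∈ Icc (0:ℝ) s0, ftil s = f s) ∧
      (∀ s : ℝ, M ≤ s → (1 + δ) * s ≤ ftil s) ∧
      Filter.Tendsto (fun s : ℝ => ftil s / s ^ p) Filter.atTop (nhds 1) := by
  obtain ⟨q, hq, hqp⟩ := exists_between hp
  have hs0_pos : 0 < s0 := hM.trans hs0
  set b := deriv f s0
  have hb : HasDerivAt f b s0 :=
    ((hf_diff.contDiffAt (Ici_mem_nhds hs0_pos)).differentiableAt one_ne_zero).hasDerivAt
  have hb_eq : derivWithin f (Ici 0) s0 = b :=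
    hb.hasDerivWithinAt.derivWithin (uniqueDiffOn_Ici 0 s0 hs0_pos.le)
  have hb_nonneg : 0 ≤ b := hb_eq ▸ hf_mono.derivWithin_nonneg
  obtain ⟨A, hA_nonneg, hA⟩ := hb.exists_mul_le_powerTail hfM hs0 hq.le (p := p)
  set T := powerTail s0 (f s0) b A q p
  have hT_s0 : f s0 = T s0 := (powerTail.apply_self (by linarith) (by linarith)).symm
  refine ⟨fun s => if s ≤ s0 then f s else T s, ?_, ?_, fun s hs => if_pos hs.2, ?_, ?_⟩
  · refine contDiffOn_Ici_if_le hs0_pos.le hf_diff (powerTail.contDiff hq.le hp.le).contDiffOn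
      hT_s0 ?_
    rw [hb_eq, (powerTail.hasDerivAt_self hq hp).hasDerivWithinAt.derivWithin
      (uniqueDiffOn_Ici s0 s0 self_mem_Ici)]
  · exact monotoneOn_Ici_if_le hs0_pos.le (hf_mono.mono Icc_subset_Ici_self)
      (powerTail.monotoneOn hb_nonneg hA_nonneg (by linarith) (by linarith)) hT_s0
  · intro s hs
    dsimp only
    split_ifs with hs'
    · exact hfM s hs
    · exact hA s (not_le.1 hs').le
  · refine (powerTail.tendsto_div_rpow hqp hp :
      Tendsto (fun s => T s / s ^ p) atTop (𝓝 1)).congr' ?_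
    filter_upwards [eventually_gt_atTop s0] with s hs
    simp [not_le.2 hs, T]

/-- Construction of the truncated nonlinearity: `f̃` agrees with `f` on `[0, s₀]`,
keeps the superlinear lower bound `(1+δ)s` above `M`, and has exact power growth
`s^p` at infinity. -/
theorem stmt_12 (f : ℝ → ℝ)
    (hf_diff : ContDiffOn ℝ 1 f (Ici 0))
    (hf_mono : MonotoneOn f (Ici 0))
    (hf0 : f 0 = 0)
    (hf'0 : derivWithin f (Ici 0) 0 = 0)
    (M δ : ℝ) (hM : 0 < M) (hδ : 0 < δ)
    (hfM : ∀ s : ℝ, M ≤ s → (1 + δ) * s ≤ f s)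
    (s0 : ℝ) (hs0 : M < s0) (p : ℝ) (hp : 1 < p) :
    ∃ ftil : ℝ → ℝ,
      ContDiffOn ℝ 1 ftil (Ici 0) ∧
      MonotoneOn ftil (Ici 0) ∧
      (∀ s ∈ Icc (0:ℝ) s0, ftil s = f s) ∧
      (∀ s : ℝ, M ≤ s → (1 + δ) * s ≤ ftil s) ∧
      Filter.Tendsto (fun s : ℝ => ftil s / s ^ p) Filter.atTop (nhds 1) :=
  stmt_12_general f hf_diff hf_mono M δ hM hfM s0 hs0 p hp
end
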